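/- arXiv:1902.04312 — 4 statements merged into one kernel-verified Lean document; each statement's English description precedes it below -/
import Mathlib

section
/- Let α and β be algebraic numbers that are not conjugate to each other (in particular α ≠ β). Then |α − β| ≥ 1 / (2^{deg(α)·deg(β)} · M(α)^{deg(β)} · M(β)^{deg(α)}). -/
open Polynomial Filter

/-- The multiset of conjugates (in ℂ) of a complex number: the roots of its
minimal polynomial over ℚ. -/
noncomputable def conjugates (α : ℂ) : Multiset ℂ :=
  ((minpoly ℚ α).map (algebraMap ℚ ℂ)).roots

/-- The house of an algebraic number: the maximum modulus of its conjugates. -/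
noncomputable def house (α : ℂ) : ℝ :=
  (((conjugates α).map (fun z => ‖z‖₊)).sup : NNReal)

/-- The primitive integer minimal polynomial of an algebraic number. -/
noncomputable def intMinPoly (α : ℂ) : Polynomial ℤ :=
  (IsLocalization.integerNormalization (nonZeroDivisors ℤ) (minpoly ℚ α)).primPart

/-- The Mahler measure of an algebraic number. -/
noncomputable def mahlerM (α : ℂ) : ℝ :=
  ((|(intMinPoly α).leadingCoeff| : ℤ) : ℝ) *
    ((((intMinPoly α).map (algebraMap ℤ ℂ)).roots).map (fun z => max 1 ‖z‖)).prod

/-- The multiplicative Weil height of an algebraic number. -/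
noncomputable def weilHeight (α : ℂ) : ℝ :=
  mahlerM α ^ ((1 : ℝ) / (minpoly ℚ α).natDegree)

/-- Value of the finite continued fraction [0; a_1, ..., a_N]. -/
noncomputable def cfVal {K : Type*} [DivisionRing K] : List K → K
  | [] => 0
  | a :: l => 1 / (a + cfVal l)

/-- The N-th convergent [0; a 1, ..., a N] of the continued fraction with partial
quotients a 1, a 2, .... -/
noncomputable def cfConv {K : Type*} [DivisionRing K] (a : ℕ → K) (N : ℕ) : K :=
  cfVal ((List.range N).map fun i => a (i + 1))


variable {Γ₀ : Type*} [LinearOrderedCommGroupWithZero Γ₀]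

lemma prod_le_one_aux (T : Multiset Γ₀) (h : ∀ x ∈ T, x ≤ 1) : T.prod ≤ 1 := by
  induction T using Multiset.induction_on with
  | empty => simp
  | cons a s ih =>
      simp only [Multiset.prod_cons]
      calc a * s.prod ≤ 1 * 1 :=
            mul_le_mul' (h a (Multiset.mem_cons_self a s)) (ih fun x hx => h x (Multiset.mem_cons_of_mem hx))
      _ = 1 := by simp

lemma one_lt_prod_aux (T : Multiset Γ₀) (h : ∀ x ∈ T, 1 < x) (hne : T ≠ 0) : 1 < T.prod := by
  induction T using Multiset.induction_on with
  | empty => simp at hne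
  | cons a s ih =>
      simp only [Multiset.prod_cons]
      rcases eq_or_ne s 0 with rfl | hs
      · simpa using h a (by simp)
      · exact lt_of_lt_of_le (h a (Multiset.mem_cons_self a s))
          (le_mul_of_one_le_right' (le_of_lt (ih (fun x hx => h x (Multiset.mem_cons_of_mem hx)) hs)))

lemma prod_pos_aux (T : Multiset Γ₀) (h : ∀ x ∈ T, 1 < x) : T.prod ≠ 0 := by
  induction T using Multiset.induction_on with
  | empty => simp
  | cons a s ih =>
      simp only [Multiset.prod_cons]
      exact mul_ne_zero (ne_of_gt (lt_trans zero_lt_one (h a (by simp))))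
        (ih fun x hx => h x (Multiset.mem_cons_of_mem hx))

-- sum valuation bound
lemma val_sum_lt_aux {K : Type*} [Field K] (w : Valuation K Γ₀) (T : Multiset K) {γ : Γ₀}
    (hγ : γ ≠ 0) (h : ∀ x ∈ T, w x < γ) : w T.sum < γ := by
  induction T using Multiset.induction_on with
  | empty => simpa using zero_lt_iff.mpr hγ
  | cons a s ih =>
      simp only [Multiset.sum_cons]
      exact lt_of_le_of_lt (w.map_add a s.sum)
        (max_lt (h a (by simp)) (ih fun x hx => h x (Multiset.mem_cons_of_mem hx)))


-- T strictly smaller than S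
lemma prod_lt_prod_aux {K : Type*} [Field K] (w : Valuation K Γ₀) (M T : Multiset K)
    (hT : T ≤ M) (hcard : Multiset.card T = Multiset.card (M.filter (fun x => 1 < w x)))
    (hne : T ≠ M.filter (fun x => 1 < w x)) :
    (T.map w).prod < ((M.filter (fun x => 1 < w x)).map w).prod := by
  classical
  have hT1le : T.filter (fun x => 1 < w x) ≤ M.filter (fun x => 1 < w x) :=
    Multiset.filter_le_filter _ hT
  have hT₁ne : T.filter (fun x => 1 < w x) ≠ M.filter (fun x => 1 < w x) := by
    intro h
    apply hne
    have hle : T.filter (fun x => 1 < w x) ≤ T := Multiset.filter_le _ T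
    have hc : Multiset.card (T.filter (fun x => 1 < w x)) = Multiset.card T := by rw [h, hcard]
    have : T.filter (fun x => 1 < w x) = T := Multiset.eq_of_le_of_card_le hle (le_of_eq hc.symm)
    rw [← this, h]
  have h1 : (T.map w).prod ≤ ((T.filter (fun x => 1 < w x)).map w).prod := by
    have hsplit : T.filter (fun x => 1 < w x) + T.filter (fun x => ¬ 1 < w x) = T :=
      Multiset.filter_add_not _ T
    calc (T.map w).prod
        = ((T.filter (fun x => 1 < w x)).map w).prod *
            ((T.filter (fun x => ¬ 1 < w x)).map w).prod := by
          conv_lhs => rw [← hsplit]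
          rw [Multiset.map_add, Multiset.prod_add]
      _ ≤ ((T.filter (fun x => 1 < w x)).map w).prod * 1 := by
          apply mul_le_mul_right
          apply prod_le_one_aux
          intro x hx
          obtain ⟨y, hy, rfl⟩ := Multiset.mem_map.mp hx
          exact le_of_not_gt (Multiset.mem_filter.mp hy).2
      _ = ((T.filter (fun x => 1 < w x)).map w).prod := mul_one _
  refine lt_of_le_of_lt h1 ?_
  obtain ⟨U, hU⟩ : ∃ U, M.filter (fun x => 1 < w x) = T.filter (fun x => 1 < w x) + U :=
    ⟨_, (tsub_add_cancel_of_le hT1le).symm.trans (add_comm _ _)⟩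
  have hUne : U ≠ 0 := by
    intro h; rw [h, add_zero] at hU; exact hT₁ne hU.symm
  have hUmem : ∀ x ∈ U, 1 < w x := by
    intro x hx
    have hxS : x ∈ M.filter (fun x => 1 < w x) := by
      rw [hU]; exact Multiset.mem_add.mpr (Or.inr hx)
    exact (Multiset.mem_filter.mp hxS).2
  have hT₁pos : ((T.filter (fun x => 1 < w x)).map w).prod ≠ 0 := by
    apply prod_pos_aux
    intro x hx; obtain ⟨y, hy, rfl⟩ := Multiset.mem_map.mp hx
    exact (Multiset.mem_filter.mp hy).2
  rw [hU, Multiset.map_add, Multiset.prod_add]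
  have hUgt : 1 < (U.map w).prod := by
    apply one_lt_prod_aux
    · intro x hx; obtain ⟨y, hy, rfl⟩ := Multiset.mem_map.mp hx; exact hUmem y hy
    · simpa using hUne
  rcases lt_or_eq_of_le (le_mul_of_one_le_right'
      (a := ((T.filter (fun x => 1 < w x)).map w).prod) hUgt.le) with h | h
  · exact h
  · exfalso
    have h2 : ((T.filter (fun x => 1 < w x)).map w).prod * (U.map w).prod
        = ((T.filter (fun x => 1 < w x)).map w).prod * 1 := by rw [mul_one]; exact h.symm
    exact absurd (mul_left_cancel₀ hT₁pos h2) (ne_of_gt hUgt)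

/-- Newton polygon bound : for an integer polynomial split over `K` with roots `M`,
the valuation of the leading coefficient times the "Mahler factors" is at most 1. -/
lemma np_bound {K : Type*} [Field K] (w : Valuation K Γ₀) (h : Polynomial ℤ) (M : Multiset K)
    (hM : M.Nodup)
    (hsplit : h.map (algebraMap ℤ K) =
      C (algebraMap ℤ K h.leadingCoeff) * (M.map fun r => X - C r).prod)
    (hw : ∀ z : ℤ, w (algebraMap ℤ K z) ≤ 1) :
    w (algebraMap ℤ K h.leadingCoeff) * (M.map fun x => max 1 (w x)).prod ≤ 1 := by
  classical
  set S := M.filter (fun x => 1 < w x) with hSdef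
  set k := Multiset.card S with hk
  have hSle : S ≤ M := Multiset.filter_le _ M
  have hkn : k ≤ Multiset.card M := Multiset.card_le_card hSle
  -- the product of max-terms equals the product over S
  have hP : (M.map fun x => max 1 (w x)).prod = (S.map w).prod := by
    have hsplit2 : S + M.filter (fun x => ¬ 1 < w x) = M := Multiset.filter_add_not _ M
    conv_lhs => rw [← hsplit2]
    rw [Multiset.map_add, Multiset.prod_add]
    have e1 : ((S.map fun x => max 1 (w x))).prod = (S.map w).prod := by
      congr 1
      apply Multiset.map_congr rfl
      intro x hx
      exact max_eq_right (le_of_lt (Multiset.mem_filter.mp hx).2)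
    have e2 : (((M.filter (fun x => ¬ 1 < w x)).map fun x => max 1 (w x))).prod = 1 := by
      apply Multiset.prod_eq_one
      intro y hy
      obtain ⟨x, hx, rfl⟩ := Multiset.mem_map.mp hy
      exact max_eq_left (le_of_not_gt (Multiset.mem_filter.mp hx).2)
    rw [e1, e2, mul_one]
  rw [hP]
  -- the coefficient identity
  have hcoeff := congrArg (fun q => Polynomial.coeff q (Multiset.card M - k)) hsplit
  simp only [Polynomial.coeff_map, Polynomial.coeff_C_mul] at hcoeff
  rw [Multiset.prod_X_sub_C_coeff M (Nat.sub_le _ _)] at hcoeff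
  have hkk : Multiset.card M - (Multiset.card M - k) = k := Nat.sub_sub_self hkn
  rw [hkk] at hcoeff
  -- value of the esymm
  have hSmem : S ∈ M.powersetCard k := Multiset.mem_powersetCard.mpr ⟨hSle, rfl⟩
  have hWS0 : (S.map w).prod ≠ 0 := by
    apply prod_pos_aux
    intro x hx; obtain ⟨y, hy, rfl⟩ := Multiset.mem_map.mp hx
    exact (Multiset.mem_filter.mp hy).2
  have hesymm : w (M.esymm k) = (S.map w).prod := by
    have hcons : S ::ₘ (M.powersetCard k).erase S = M.powersetCard k :=
      Multiset.cons_erase hSmem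
    have hnodup : (M.powersetCard k).Nodup := hM.powersetCard
    have hrest : w ((((M.powersetCard k).erase S).map Multiset.prod).sum) < (S.map w).prod := by
      apply val_sum_lt_aux w _ hWS0
      intro x hx
      obtain ⟨T, hT, rfl⟩ := Multiset.mem_map.mp hx
      have hTS : T ≠ S ∧ T ∈ M.powersetCard k := hnodup.mem_erase_iff.mp hT
      obtain ⟨hTle, hTcard⟩ := Multiset.mem_powersetCard.mp hTS.2
      have : w T.prod = (T.map w).prod := map_multiset_prod w T
      rw [this]
      exact prod_lt_prod_aux w M T hTle hTcard hTS.1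
    have hWS : w S.prod = (S.map w).prod := map_multiset_prod w S
    rw [Multiset.esymm, ← hcons, Multiset.map_cons, Multiset.sum_cons]
    rw [Valuation.map_add_of_distinct_val, hWS]
    · exact max_eq_left hrest.le
    · rw [hWS]; exact ne_of_gt hrest
  calc w (algebraMap ℤ K h.leadingCoeff) * (S.map w).prod
      = w (algebraMap ℤ K h.leadingCoeff) * (w ((-1) ^ k * M.esymm k)) := by
        rw [Valuation.map_mul, Valuation.map_pow, Valuation.map_neg, Valuation.map_one,
          one_pow, one_mul, hesymm]
    _ = w (algebraMap ℤ K h.leadingCoeff * ((-1) ^ k * M.esymm k)) := (Valuation.map_mul _ _ _).symm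
    _ = w (algebraMap ℤ K (h.coeff (Multiset.card M - k))) := by rw [← hcoeff]
    _ ≤ 1 := hw _

/-- A rational number whose image in `ℂ` has valuation ≤ 1 for every valuation subring
of `ℂ` containing the integers (with value ≤ 1) is an integer. -/
lemma exists_int_eq_of_forall_val_le_one (q : ℚ)
    (h : ∀ (A : ValuationSubring ℂ), (∀ z : ℤ, A.valuation (z : ℂ) ≤ 1) →
      A.valuation (q : ℂ) ≤ 1) :
    ∃ N : ℤ, (N : ℚ) = q := by
  rcases eq_or_ne q 0 with rfl | hq0
  · exact ⟨0, by norm_num⟩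
  -- it suffices to show the denominator is 1
  suffices hden : q.den = 1 by
    refine ⟨q.num, ?_⟩
    rw [← Rat.num_div_den q, hden]; simp
  by_contra hden
  obtain ⟨p, hp, hpdvd⟩ := Nat.exists_prime_and_dvd hden
  -- the localization of ℤ at p
  have hpZ : Prime ((p : ℤ)) := Int.prime_iff_natAbs_prime.mpr (by simpa using hp)
  haveI hPprime : (Ideal.span {(p : ℤ)}).IsPrime :=
    (Ideal.span_singleton_prime hpZ.ne_zero).mpr hpZ
  set P : Ideal ℤ := Ideal.span {(p : ℤ)} with hP
  let R := Localization.AtPrime P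
  -- the map R →+* ℂ
  have hunits : ∀ y : P.primeCompl, IsUnit ((algebraMap ℤ ℂ) (y : ℤ)) := by
    rintro ⟨y, hy⟩
    have hy0 : y ≠ 0 := by
      rintro rfl
      exact hy (Ideal.zero_mem P)
    simpa using (isUnit_iff_ne_zero.mpr (by exact_mod_cast hy0 : ((y : ℤ) : ℂ) ≠ 0))
  let f : R →+* ℂ := IsLocalization.lift (M := P.primeCompl) (S := R) hunits
  have hf : ∀ z : ℤ, f (algebraMap ℤ R z) = (z : ℂ) := by
    intro z
    have := IsLocalization.lift_eq (M := P.primeCompl) (S := R) hunits z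
    simpa using this
  obtain ⟨A, hmem, hloc⟩ := IsLocalRing.exists_factor_valuationRing f
  -- all integers are in A
  have hZA : ∀ z : ℤ, (z : ℂ) ∈ A := fun z => by
    have := hmem (algebraMap ℤ R z)
    rwa [hf] at this
  have hZval : ∀ z : ℤ, A.valuation (z : ℂ) ≤ 1 := fun z => A.valuation_le_one ⟨_, hZA z⟩
  have hqA : ((q : ℂ)) ∈ A := A.mem_of_valuation_le_one _ (h A hZval)
  -- p does not divide the numerator
  have hpnum : ¬ ((p : ℤ) ∣ q.num) := by
    intro hdvd
    have h1 : p ∣ q.num.natAbs := Int.ofNat_dvd_right.mp (Int.dvd_natAbs.mpr hdvd)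
    have := Nat.dvd_gcd h1 hpdvd
    rw [q.reduced] at this
    exact hp.one_lt.ne' (Nat.eq_one_of_dvd_one this)
  -- the numerator is a unit in R
  have hnum_unit : IsUnit (algebraMap ℤ R q.num) := by
    rw [IsLocalization.AtPrime.isUnit_to_map_iff R P]
    intro hmemP
    exact hpnum (Ideal.mem_span_singleton.mp hmemP)
  obtain ⟨u, hu⟩ := hnum_unit
  -- e = den / p
  obtain ⟨e, he⟩ := hpdvd
  -- the inverse of p in ℂ lies in A
  have hnum0 : (q.num : ℂ) ≠ 0 := by exact_mod_cast Rat.num_ne_zero.mpr hq0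
  have hfu_inv : f ((u⁻¹ : Rˣ) : R) = (q.num : ℂ)⁻¹ := by
    have h1 : f ((u : R)) * f ((u⁻¹ : Rˣ) : R) = 1 := by
      rw [← map_mul, u.mul_inv, map_one]
    rw [hu, hf] at h1
    field_simp at h1 ⊢
    linear_combination h1
  have hinvA : ((p : ℂ))⁻¹ ∈ A := by
    have hcalc : ((p : ℂ))⁻¹ = (q : ℂ) * ((e : ℤ) : ℂ) * f ((u⁻¹ : Rˣ) : R) := by
      rw [hfu_inv]
      have hden : ((q.den : ℂ)) = (p : ℂ) * (e : ℂ) := by exact_mod_cast congrArg (Nat.cast : ℕ → ℂ) he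
      have hqc : (q : ℂ) = (q.num : ℂ) / (q.den : ℂ) := by
        push_cast [Rat.cast_def]; ring
      have hp0 : (p : ℂ) ≠ 0 := by exact_mod_cast hp.ne_zero
      have hden0 : ((q.den : ℂ)) ≠ 0 := by exact_mod_cast q.den_nz
      have he0 : (e : ℂ) ≠ 0 := by
        intro h0
        rw [show (e:ℂ) = ((e:ℕ):ℂ) from rfl] at h0
        have : e = 0 := by exact_mod_cast h0
        rw [this, mul_zero] at he
        exact q.den_nz he
      rw [hqc, hden]
      push_cast
      field_simp
    rw [hcalc]
    exact mul_mem (mul_mem hqA (hZA e)) (hmem _)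
  -- hence p is a unit in A, contradiction with localness
  have hpu : IsUnit (f.codRestrict A.toSubring hmem (algebraMap ℤ R (p : ℤ))) := by
    rw [isUnit_iff_exists_inv]
    refine ⟨⟨((p : ℂ))⁻¹, hinvA⟩, ?_⟩
    ext
    show f (algebraMap ℤ R (p : ℤ)) * ((p : ℂ))⁻¹ = 1
    rw [hf]
    have hp0 : ((p:ℕ) : ℂ) ≠ 0 := by exact_mod_cast hp.ne_zero
    push_cast
    exact mul_inv_cancel₀ hp0
  have := hloc.map_nonunit _ hpu
  rw [IsLocalization.AtPrime.isUnit_to_map_iff R P] at this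
  exact this (Ideal.mem_span_singleton.mpr dvd_rfl)

/-- If `M` is the root multiset in `ℂ` of a polynomial with rational coefficients
(which splits as a product of linear factors), then for any rational polynomial `g`,
the product `∏_{x ∈ M} g(x)` is rational. -/
lemma prod_eval_roots_rational (p g : ℚ[X]) (M : Multiset ℂ)
    (hsplit : p.map (algebraMap ℚ ℂ) = (M.map fun r => X - C r).prod) :
    ∃ r : ℚ, algebraMap ℚ ℂ r = (M.map fun x => Polynomial.aeval x g).prod := by
  classical
  set l : List ℂ := M.toList with hl
  have hlM : (l : Multiset ℂ) = M := M.coe_toList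
  set n := l.length with hn
  -- the evaluation homomorphism
  set φ : MvPolynomial (Fin n) ℚ →ₐ[ℚ] ℂ := MvPolynomial.aeval l.get with hφ
  have huniv : (Finset.univ.val.map l.get) = M := by
    have h1 : (Finset.univ : Finset (Fin n)).val = ↑(List.finRange n) := by rw [Fin.univ_def]
    rw [h1, Multiset.map_coe, List.map_get_finRange, hlM]
  -- the symmetric polynomial
  set Symm : MvPolynomial (Fin n) ℚ := ∏ i : Fin n, Polynomial.aeval (MvPolynomial.X i) g
    with hSymm
  have hsym : Symm.IsSymmetric := by
    intro e
    rw [hSymm, map_prod]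
    simp only [← Polynomial.aeval_algHom_apply, MvPolynomial.rename_X]
    exact Equiv.prod_comp e (fun j => Polynomial.aeval (MvPolynomial.X j) g)
  -- φ of Symm is the product we want
  have hval : φ Symm = (M.map fun x => Polynomial.aeval x g).prod := by
    rw [hSymm, map_prod]
    simp only [← Polynomial.aeval_algHom_apply, hφ, MvPolynomial.aeval_X]
    rw [← huniv]
    rw [Multiset.map_map]
    rw [Finset.prod_eq_multiset_prod]
    rfl
  -- each esymm evaluates to a rational number
  have hesymm : ∀ k : ℕ, φ (MvPolynomial.esymm (Fin n) ℚ k) ∈ (⊥ : Subalgebra ℚ ℂ) := by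
    intro k
    rw [hφ, MvPolynomial.aeval_esymm_eq_multiset_esymm, huniv]
    rcases le_or_gt k (Multiset.card M) with hk | hk
    · have hcoeff := congrArg (fun q' => Polynomial.coeff q' (Multiset.card M - k)) hsplit
      rw [Multiset.prod_X_sub_C_coeff M (Nat.sub_le _ _), Nat.sub_sub_self hk] at hcoeff
      have : M.esymm k = (-1 : ℂ) ^ k * algebraMap ℚ ℂ (p.coeff (Multiset.card M - k)) := by
        rw [← Polynomial.coeff_map, hcoeff]
        have h1 : ((-1 : ℂ) ^ k) * ((-1 : ℂ) ^ k) = 1 := by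
          rw [← pow_add]; simp [pow_mul]
        calc M.esymm k = (((-1:ℂ))^k * ((-1:ℂ))^k) * M.esymm k := by rw [h1, one_mul]
          _ = (-1:ℂ)^k * ((-1:ℂ)^k * M.esymm k) := by ring
      rw [this]
      apply Subalgebra.mul_mem
      · exact Subalgebra.pow_mem _ (Subalgebra.neg_mem _ (Subalgebra.one_mem _)) _
      · exact Subalgebra.algebraMap_mem _ _
    · have : M.esymm k = 0 := by
        rw [Multiset.esymm]
        rw [Multiset.powersetCard_eq_empty]
        · simp
        · exact hk
      rw [this]
      exact Subalgebra.zero_mem _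
  -- use the fundamental theorem of symmetric polynomials
  obtain ⟨P, hP⟩ := MvPolynomial.esymmAlgHom_surjective (R := ℚ) (σ := Fin n) (n := n)
    (le_of_eq (Fintype.card_fin n)) ⟨Symm, hsym⟩
  have hPval : Symm = MvPolynomial.aeval
      (fun i : Fin n => MvPolynomial.esymm (Fin n) ℚ (i + 1)) P := by
    have := congrArg Subtype.val hP
    rw [MvPolynomial.esymmAlgHom_apply] at this
    exact this.symm
  have hbot : φ Symm ∈ (⊥ : Subalgebra ℚ ℂ) := by
    rw [hPval]
    have hcomp : φ (MvPolynomial.aeval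
        (fun i : Fin n => MvPolynomial.esymm (Fin n) ℚ (i + 1)) P)
        = MvPolynomial.aeval (fun i : Fin n =>
            φ (MvPolynomial.esymm (Fin n) ℚ (i + 1))) P := by
      rw [← MvPolynomial.comp_aeval_apply]
    rw [hcomp]
    have hgen : ∀ Q : MvPolynomial (Fin n) ℚ, MvPolynomial.aeval (fun i : Fin n =>
        φ (MvPolynomial.esymm (Fin n) ℚ (i + 1))) Q ∈ (⊥ : Subalgebra ℚ ℂ) := by
      intro Q
      induction Q using MvPolynomial.induction_on with
      | C r => rw [MvPolynomial.aeval_C]; exact Subalgebra.algebraMap_mem _ r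
      | add a b ha hb => rw [map_add]; exact Subalgebra.add_mem _ ha hb
      | mul_X a i ha =>
          rw [map_mul]
          exact Subalgebra.mul_mem _ ha (by simpa using hesymm (i + 1))
    exact hgen P
  rw [hval] at hbot
  exact Algebra.mem_bot.mp hbot

section GammaAux
variable {Γ₀ : Type*} [LinearOrderedCommGroupWithZero Γ₀] {X : Type*}

lemma mprod_le_mprod (s : Multiset X) (f g : X → Γ₀) (h : ∀ x ∈ s, f x ≤ g x) :
    (s.map f).prod ≤ (s.map g).prod := by
  induction s using Multiset.induction_on with
  | empty => simp
  | cons a t ih =>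
      simp only [Multiset.map_cons, Multiset.prod_cons]
      exact mul_le_mul' (h a (by simp)) (ih fun x hx => h x (Multiset.mem_cons_of_mem hx))

/-- main valuation bound for the resultant-like quantity -/
lemma val_main_bound (w : Valuation ℂ Γ₀) (Mf Mg : Multiset ℂ) (aC bC : ℂ)
    (hf : w aC * (Mf.map fun x => max 1 (w x)).prod ≤ 1)
    (hg : w bC * (Mg.map fun x => max 1 (w x)).prod ≤ 1) :
    w (aC ^ Multiset.card Mg * bC ^ Multiset.card Mf *
      (Mf.map (fun x => (Mg.map fun y => x - y).prod)).prod) ≤ 1 := by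
  set m := Multiset.card Mg
  set n := Multiset.card Mf
  set Pf := (Mf.map fun x => max 1 (w x)).prod with hPf
  set Pg := (Mg.map fun x => max 1 (w x)).prod with hPg
  have hsub : ∀ x y : ℂ, w (x - y) ≤ max 1 (w x) * max 1 (w y) := by
    intro x y
    refine le_trans (w.map_sub x y) (max_le ?_ ?_)
    · exact le_trans (le_max_right 1 (w x)) (le_mul_of_one_le_right' (le_max_left _ _))
    · exact le_trans (le_max_right 1 (w y)) (le_mul_of_one_le_left' (le_max_left _ _))
  have hinner : ∀ x : ℂ, w ((Mg.map fun y => x - y).prod) ≤ max 1 (w x) ^ m * Pg := by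
    intro x
    have h1 : w ((Mg.map fun y => x - y).prod) = ((Mg.map fun y => x - y).map w).prod :=
      map_multiset_prod w _
    rw [h1, Multiset.map_map]
    calc (Mg.map fun y => w (x - y)).prod
        ≤ (Mg.map fun y => max 1 (w x) * max 1 (w y)).prod :=
          mprod_le_mprod _ _ _ (fun y _ => hsub x y)
      _ = (Mg.map fun _ => max 1 (w x)).prod * Pg := by
          rw [← Multiset.prod_map_mul]
      _ = max 1 (w x) ^ m * Pg := by
          rw [Multiset.map_const', Multiset.prod_replicate]
  have houter : w ((Mf.map (fun x => (Mg.map fun y => x - y).prod)).prod) ≤ Pf ^ m * Pg ^ n := by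
    have h1 : w ((Mf.map (fun x => (Mg.map fun y => x - y).prod)).prod)
        = ((Mf.map (fun x => (Mg.map fun y => x - y).prod)).map w).prod := map_multiset_prod w _
    rw [h1, Multiset.map_map]
    calc (Mf.map fun x => w ((Mg.map fun y => x - y).prod)).prod
        ≤ (Mf.map fun x => max 1 (w x) ^ m * Pg).prod :=
          mprod_le_mprod _ _ _ (fun x _ => hinner x)
      _ = (Mf.map fun x => max 1 (w x) ^ m).prod * (Mf.map fun _ => Pg).prod :=
          Multiset.prod_map_mul
      _ = Pf ^ m * Pg ^ n := by
          rw [Multiset.prod_map_pow, Multiset.map_const', Multiset.prod_replicate]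
  calc w (aC ^ m * bC ^ n * (Mf.map (fun x => (Mg.map fun y => x - y).prod)).prod)
      = w aC ^ m * w bC ^ n * w ((Mf.map (fun x => (Mg.map fun y => x - y).prod)).prod) := by
        rw [Valuation.map_mul, Valuation.map_mul, Valuation.map_pow, Valuation.map_pow]
    _ ≤ w aC ^ m * w bC ^ n * (Pf ^ m * Pg ^ n) := mul_le_mul_right houter _
    _ = (w aC * Pf) ^ m * (w bC * Pg) ^ n := by rw [mul_pow, mul_pow]; exact mul_mul_mul_comm _ _ _ _
    _ ≤ 1 ^ m * 1 ^ n := mul_le_mul' (pow_le_pow_left' hf m) (pow_le_pow_left' hg n)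
    _ = 1 := by simp

end GammaAux

section RealAux
variable {X : Type*}

lemma rprod_nonneg (s : Multiset X) (f : X → ℝ) (h : ∀ x ∈ s, 0 ≤ f x) :
    0 ≤ (s.map f).prod := by
  induction s using Multiset.induction_on with
  | empty => simp
  | cons a t ih =>
      simp only [Multiset.map_cons, Multiset.prod_cons]
      exact mul_nonneg (h a (by simp)) (ih fun x hx => h x (Multiset.mem_cons_of_mem hx))

lemma rprod_le_rprod (s : Multiset X) (f g : X → ℝ) (h0 : ∀ x ∈ s, 0 ≤ f x)
    (h : ∀ x ∈ s, f x ≤ g x) : (s.map f).prod ≤ (s.map g).prod := by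
  induction s using Multiset.induction_on with
  | empty => simp
  | cons a t ih =>
      simp only [Multiset.map_cons, Multiset.prod_cons]
      have ht0 : 0 ≤ (t.map f).prod := rprod_nonneg _ _ (fun x hx => h0 x (Multiset.mem_cons_of_mem hx))
      exact mul_le_mul (h a (by simp)) (ih (fun x hx => h0 x (Multiset.mem_cons_of_mem hx))
        (fun x hx => h x (Multiset.mem_cons_of_mem hx))) ht0
        (le_trans (h0 a (by simp)) (h a (by simp)))

lemma rprod_one_le (s : Multiset X) (f : X → ℝ) (h : ∀ x ∈ s, 1 ≤ f x) :
    1 ≤ (s.map f).prod := by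
  induction s using Multiset.induction_on with
  | empty => simp
  | cons a t ih =>
      simp only [Multiset.map_cons, Multiset.prod_cons]
      have := ih fun x hx => h x (Multiset.mem_cons_of_mem hx)
      nlinarith [h a (Multiset.mem_cons_self a t)]

end RealAux


lemma intMinPoly_map_eq (α : ℂ) (hα : IsAlgebraic ℚ α) :
    ∃ c : ℚ, c ≠ 0 ∧ (intMinPoly α).map (algebraMap ℤ ℚ) = C c * minpoly ℚ α := by
  set p := minpoly ℚ α with hp
  have hp0 : p ≠ 0 := minpoly.ne_zero hα.isIntegral
  obtain ⟨b, hb⟩ := IsLocalization.integerNormalization_map_to_map (nonZeroDivisors ℤ) p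
  set h : Polynomial ℤ := IsLocalization.integerNormalization (nonZeroDivisors ℤ) p with hh
  have hb' : h.map (algebraMap ℤ ℚ) = C ((b : ℤ) : ℚ) * p := by
    rw [hb, algebra_compatible_smul ℚ ((b : ℤ)) p, Polynomial.smul_eq_C_mul]
    norm_num
  have hbne : ((b : ℤ) : ℚ) ≠ 0 := by
    have := nonZeroDivisors.coe_ne_zero b
    exact_mod_cast this
  have hhne : h ≠ 0 := by
    intro h0
    rw [h0, Polynomial.map_zero] at hb'
    have := mul_eq_zero.mp hb'.symm
    rcases this with h1 | h1
    · exact hbne (by simpa using h1)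
    · exact hp0 h1
  have hcne : ((h.content : ℚ)) ≠ 0 := by
    have : h.content ≠ 0 := fun hc => hhne (Polynomial.content_eq_zero_iff.mp hc)
    exact_mod_cast this
  have hmap : h.map (algebraMap ℤ ℚ) =
      C ((h.content : ℚ)) * (intMinPoly α).map (algebraMap ℤ ℚ) := by
    conv_lhs => rw [h.eq_C_content_mul_primPart]
    rw [Polynomial.map_mul, Polynomial.map_C]
    rfl
  have key : C ((h.content : ℚ)) * (intMinPoly α).map (algebraMap ℤ ℚ) = C ((b:ℤ):ℚ) * p :=
    hmap.symm.trans hb'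
  refine ⟨(h.content : ℚ)⁻¹ * ((b : ℤ) : ℚ), by positivity, ?_⟩
  have := congrArg (fun r => C ((h.content : ℚ))⁻¹ * r) key
  rw [← mul_assoc, ← C_mul, inv_mul_cancel₀ hcne, C_1, one_mul, ← mul_assoc, ← C_mul] at this
  exact this

lemma intMinPoly_bundle (α : ℂ) (hα : IsAlgebraic ℚ α) :
    (intMinPoly α).leadingCoeff ≠ 0 ∧
    ((intMinPoly α).map (algebraMap ℤ ℂ)).roots
      = ((minpoly ℚ α).map (algebraMap ℚ ℂ)).roots ∧
    Multiset.card (((intMinPoly α).map (algebraMap ℤ ℂ)).roots) = (minpoly ℚ α).natDegree ∧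
    (((intMinPoly α).map (algebraMap ℤ ℂ)).roots).Nodup ∧
    α ∈ ((intMinPoly α).map (algebraMap ℤ ℂ)).roots ∧
    (intMinPoly α).map (algebraMap ℤ ℂ) = C (algebraMap ℤ ℂ (intMinPoly α).leadingCoeff) *
      ((((intMinPoly α).map (algebraMap ℤ ℂ)).roots).map fun r => X - C r).prod ∧
    (minpoly ℚ α).map (algebraMap ℚ ℂ)
      = ((((intMinPoly α).map (algebraMap ℤ ℂ)).roots).map fun r => X - C r).prod := by
  obtain ⟨c, hc, hcmap⟩ := intMinPoly_map_eq α hα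
  set p := minpoly ℚ α with hpdef
  set f := intMinPoly α with hfdef
  have hp0 : p ≠ 0 := minpoly.ne_zero hα.isIntegral
  have hpmonic : p.Monic := minpoly.monic hα.isIntegral
  have htower : algebraMap ℤ ℂ = (algebraMap ℚ ℂ).comp (algebraMap ℤ ℚ) :=
    (IsScalarTower.algebraMap_eq ℤ ℚ ℂ).symm ▸ rfl
  have hfC : f.map (algebraMap ℤ ℂ) = C (algebraMap ℚ ℂ c) * p.map (algebraMap ℚ ℂ) := by
    rw [htower, ← Polynomial.map_map, hcmap, Polynomial.map_mul, Polynomial.map_C]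
  have hcC : algebraMap ℚ ℂ c ≠ 0 := by
    simpa using hc
  -- leading coefficient of f
  have hflc : ((f.leadingCoeff : ℚ)) = c := by
    have h1 : (f.map (algebraMap ℤ ℚ)).leadingCoeff = (f.leadingCoeff : ℚ) := by
      rw [Polynomial.leadingCoeff_map_of_leadingCoeff_ne_zero]
      · rfl
      · intro h0
        rw [algebraMap_int_eq, eq_intCast, Int.cast_eq_zero] at h0
        have : f.leadingCoeff = 0 := h0
        rw [Polynomial.leadingCoeff_eq_zero] at this
        rw [this, Polynomial.map_zero] at hcmap
        exact hp0 (by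
          have := mul_eq_zero.mp hcmap.symm
          rcases this with h1 | h1
          · exact absurd (by simpa using h1) hc
          · exact h1)
    rw [hcmap] at h1
    rw [Polynomial.leadingCoeff_mul, Polynomial.leadingCoeff_C, hpmonic.leadingCoeff,
      mul_one] at h1
    exact h1.symm
  have hflc0 : f.leadingCoeff ≠ 0 := by
    intro h0
    apply hc
    rw [← hflc, h0]; simp
  -- roots equality
  have hroots : (f.map (algebraMap ℤ ℂ)).roots = (p.map (algebraMap ℚ ℂ)).roots := by
    rw [hfC, Polynomial.roots_C_mul _ hcC]
  -- p splits in ℂ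
  have hmonicC : (p.map (algebraMap ℚ ℂ)).Monic := hpmonic.map _
  have hsplitsC : (p.map (algebraMap ℚ ℂ)).Splits :=
    IsAlgClosed.splits _
  have hprod : p.map (algebraMap ℚ ℂ)
      = (((p.map (algebraMap ℚ ℂ)).roots).map fun r => X - C r).prod :=
    hsplitsC.eq_prod_roots_of_monic hmonicC
  have hcard : Multiset.card ((p.map (algebraMap ℚ ℂ)).roots) = p.natDegree := by
    rw [Polynomial.splits_iff_card_roots.mp hsplitsC]
    exact Polynomial.natDegree_map_eq_of_injective (algebraMap ℚ ℂ).injective p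
  have hsep : p.Separable := (minpoly.irreducible hα.isIntegral).separable
  have hnodup : ((p.map (algebraMap ℚ ℂ)).roots).Nodup :=
    Polynomial.nodup_roots (hsep.map)
  have hpmapne : p.map (algebraMap ℚ ℂ) ≠ 0 :=
    (Polynomial.map_ne_zero_iff (algebraMap ℚ ℂ).injective).mpr hp0
  have hmem : α ∈ (p.map (algebraMap ℚ ℂ)).roots := by
    refine Polynomial.mem_roots'.mpr ⟨hpmapne, ?_⟩
    rw [Polynomial.IsRoot, Polynomial.eval_map, ← Polynomial.aeval_def]
    exact minpoly.aeval ℚ α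
  -- the C-lead relation
  have hac : algebraMap ℤ ℂ f.leadingCoeff = algebraMap ℚ ℂ c := by
    rw [← hflc, htower]
    simp
  refine ⟨hflc0, hroots, by rw [hroots, hcard], by rw [hroots]; exact hnodup,
    by rw [hroots]; exact hmem, ?_, by rw [hroots]; exact hprod⟩
  rw [hfC, hac, Polynomial.roots_C_mul _ hcC]
  congr 1

set_option maxHeartbeats 2000000 in
theorem liouville_mignotte (α β : ℂ) (hα : IsAlgebraic ℚ α) (hβ : IsAlgebraic ℚ β)
    (hnc : minpoly ℚ α ≠ minpoly ℚ β) :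
    ‖α - β‖ ≥
      1 / (2 ^ ((minpoly ℚ α).natDegree * (minpoly ℚ β).natDegree) *
        mahlerM α ^ (minpoly ℚ β).natDegree * mahlerM β ^ (minpoly ℚ α).natDegree) := by
  classical
  obtain ⟨ha0, hMfp, hMfcard, hMfnodup, hMfα, hfsplit, hpsplit⟩ := intMinPoly_bundle α hα
  obtain ⟨hb0, hMgq, hMgcard, hMgnodup, hMgβ, hgsplit, hqsplit⟩ := intMinPoly_bundle β hβ
  set p := minpoly ℚ α with hpdef
  set q := minpoly ℚ β with hqdef
  set f := intMinPoly α with hfdef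
  set g := intMinPoly β with hgdef
  set Mf : Multiset ℂ := ((f.map (algebraMap ℤ ℂ)).roots) with hMf
  set Mg : Multiset ℂ := ((g.map (algebraMap ℤ ℂ)).roots) with hMg
  set n := p.natDegree with hndef
  set m := q.natDegree with hmdef
  set a := f.leadingCoeff with hadef
  set b := g.leadingCoeff with hbdef
  -- distinct roots
  have hxy : ∀ x ∈ Mf, ∀ y ∈ Mg, x ≠ y := by
    intro x hx y hy hxyeq
    subst hxyeq
    rw [hMfp] at hx
    rw [hMgq] at hy
    obtain ⟨hpne, hproot⟩ := Polynomial.mem_roots'.mp hx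
    obtain ⟨hqne, hqroot⟩ := Polynomial.mem_roots'.mp hy
    have hpx : Polynomial.aeval x p = 0 := by
      rw [Polynomial.aeval_def, ← Polynomial.eval_map]; exact hproot
    have hqx : Polynomial.aeval x q = 0 := by
      rw [Polynomial.aeval_def, ← Polynomial.eval_map]; exact hqroot
    have h1 : p = minpoly ℚ x :=
      minpoly.eq_of_irreducible_of_monic (minpoly.irreducible hα.isIntegral) hpx
        (minpoly.monic hα.isIntegral)
    have h2 : q = minpoly ℚ x :=
      minpoly.eq_of_irreducible_of_monic (minpoly.irreducible hβ.isIntegral) hqx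
        (minpoly.monic hβ.isIntegral)
    exact hnc (h1.trans h2.symm)
  -- the quantity Q and R
  set Q : ℂ := (Mf.map (fun x => (Mg.map fun y => x - y).prod)).prod with hQ
  set R : ℂ := (algebraMap ℤ ℂ a) ^ m * (algebraMap ℤ ℂ b) ^ n * Q with hR
  -- rationality
  have haeval : ∀ x : ℂ, Polynomial.aeval x q = (Mg.map fun y => x - y).prod := by
    intro x
    rw [Polynomial.aeval_def, ← Polynomial.eval_map, hqsplit, Polynomial.eval_multiset_prod,
      Multiset.map_map]
    congr 1
    apply Multiset.map_congr rfl
    intro y _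
    simp
  obtain ⟨r, hr⟩ := prod_eval_roots_rational p q Mf hpsplit
  have hrQ : algebraMap ℚ ℂ r = Q := by
    rw [hr, hQ]
    congr 1
    apply Multiset.map_congr rfl
    intro x _
    exact haeval x
  set q₀ : ℚ := (a : ℚ) ^ m * (b : ℚ) ^ n * r with hq₀
  have hZa : algebraMap ℚ ℂ ((a : ℚ)) = algebraMap ℤ ℂ a := by
    simp [algebraMap_int_eq]
  have hZb : algebraMap ℚ ℂ ((b : ℚ)) = algebraMap ℤ ℂ b := by
    simp [algebraMap_int_eq]
  have hq₀R : algebraMap ℚ ℂ q₀ = R := by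
    rw [hq₀, map_mul, map_mul, map_pow, map_pow, hrQ, hR, hZa, hZb]
  -- integrality
  obtain ⟨N, hN⟩ : ∃ N : ℤ, (N : ℚ) = q₀ := by
    apply exists_int_eq_of_forall_val_le_one
    intro A hZ
    set w := A.valuation with hw
    have hq₀cast : ((q₀ : ℂ)) = algebraMap ℚ ℂ q₀ := (eq_ratCast (algebraMap ℚ ℂ) q₀).symm
    rw [hq₀cast, hq₀R]
    have hwZ : ∀ z : ℤ, w (algebraMap ℤ ℂ z) ≤ 1 := by
      intro z
      rw [algebraMap_int_eq, eq_intCast]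
      exact hZ z
    have NPf := np_bound w f Mf hMfnodup hfsplit hwZ
    have NPg := np_bound w g Mg hMgnodup hgsplit hwZ
    have := val_main_bound w Mf Mg (algebraMap ℤ ℂ a) (algebraMap ℤ ℂ b) NPf NPg
    rw [hMgcard, hMfcard] at this
    exact this
  -- N is nonzero
  have hQne : Q ≠ 0 := by
    rw [hQ]
    apply Multiset.prod_ne_zero
    intro h0
    obtain ⟨x, hx, hx0⟩ := Multiset.mem_map.mp h0
    have := Multiset.prod_eq_zero_iff.mp hx0
    obtain ⟨y, hy, hy0⟩ := Multiset.mem_map.mp this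
    exact hxy x hx y hy (sub_eq_zero.mp hy0)
  have haC : algebraMap ℤ ℂ a ≠ 0 := by
    rw [algebraMap_int_eq, eq_intCast]
    exact_mod_cast ha0
  have hbC : algebraMap ℤ ℂ b ≠ 0 := by
    rw [algebraMap_int_eq, eq_intCast]
    exact_mod_cast hb0
  have hRne : R ≠ 0 := by
    rw [hR]
    exact mul_ne_zero (mul_ne_zero (pow_ne_zero _ haC) (pow_ne_zero _ hbC)) hQne
  have hNne : N ≠ 0 := by
    intro h0
    rw [h0] at hN
    apply hRne
    rw [← hq₀R, ← hN]
    simp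
  -- pass to absolute values
  have habsN : (1 : ℝ) ≤ ‖((N : ℚ) : ℂ)‖ := by
    rw [show (((N : ℚ) : ℂ)) = ((N : ℤ) : ℂ) by push_cast; ring]
    rw [Complex.norm_intCast]
    exact_mod_cast Int.one_le_abs hNne
  have hNR : ((N : ℚ) : ℂ) = R := by
    rw [← hq₀R, ← hN]
    push_cast
    rw [eq_ratCast (algebraMap ℚ ℂ) ((N : ℚ))]
    push_cast
    ring
  -- real quantities
  set c1 : ℂ → ℝ := fun z => max 1 (‖z‖) with hc1
  set PA : ℝ := (Mf.map c1).prod with hPA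
  set PB : ℝ := (Mg.map c1).prod with hPB
  set ca : ℝ := ‖algebraMap ℤ ℂ a‖ with hca
  set cb : ℝ := ‖algebraMap ℤ ℂ b‖ with hcb
  have hc1pos : ∀ z : ℂ, (1:ℝ) ≤ c1 z := fun z => le_max_left _ _
  have hc1abs : ∀ z : ℂ, ‖z‖ ≤ c1 z := fun z => le_max_right _ _
  have hPA1 : (1:ℝ) ≤ PA := rprod_one_le _ _ (fun x _ => hc1pos x)
  have hPB1 : (1:ℝ) ≤ PB := rprod_one_le _ _ (fun x _ => hc1pos x)
  have hca1 : (1:ℝ) ≤ ca := by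
    rw [hca, algebraMap_int_eq, eq_intCast, Complex.norm_intCast]
    exact_mod_cast Int.one_le_abs ha0
  have hcb1 : (1:ℝ) ≤ cb := by
    rw [hcb, algebraMap_int_eq, eq_intCast, Complex.norm_intCast]
    exact_mod_cast Int.one_le_abs hb0
  -- Mahler measures
  have hMα : mahlerM α = ca * PA := by
    rw [mahlerM]
    congr 1
    · rw [hca, algebraMap_int_eq, eq_intCast, Complex.norm_intCast, Int.cast_abs]
  have hMβ : mahlerM β = cb * PB := by
    rw [mahlerM]
    congr 1
    · rw [hcb, algebraMap_int_eq, eq_intCast, Complex.norm_intCast, Int.cast_abs]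
  -- |R| decomposition
  set F : ℂ → ℝ := fun x => (Mg.map fun y => ‖x - y‖).prod with hF
  have habsR : ‖R‖ = ca ^ m * cb ^ n * (Mf.map F).prod := by
    rw [hR, norm_mul, norm_mul, norm_pow, norm_pow]
    congr 1
    rw [hQ, ← normHom_apply, map_multiset_prod, Multiset.map_map]
    congr 1
    apply Multiset.map_congr rfl
    intro x _
    simp only [Function.comp_apply]
    rw [map_multiset_prod, Multiset.map_map]
    rfl
  -- extract the pair (α, β)
  obtain ⟨Mf', hMf'⟩ : ∃ Mf', Mf = α ::ₘ Mf' := ⟨Mf.erase α, (Multiset.cons_erase hMfα).symm⟩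
  obtain ⟨Mg', hMg'⟩ : ∃ Mg', Mg = β ::ₘ Mg' := ⟨Mg.erase β, (Multiset.cons_erase hMgβ).symm⟩
  have hFnonneg : ∀ x : ℂ, 0 ≤ F x := fun x =>
    rprod_nonneg _ _ (fun y _ => norm_nonneg _)
  have hFα : F α = ‖α - β‖ * (Mg'.map fun y => ‖α - y‖).prod := by
    rw [hF]
    simp only
    rw [hMg', Multiset.map_cons, Multiset.prod_cons]
  have hsplitD : (Mf.map F).prod = F α * (Mf'.map F).prod := by
    rw [hMf', Multiset.map_cons, Multiset.prod_cons]
  -- bounds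
  set B2 : ℂ → ℂ → ℝ := fun x y => 2 * c1 x * c1 y with hB2
  have hpair : ∀ x y : ℂ, ‖x - y‖ ≤ B2 x y := by
    intro x y
    have h1 : ‖x - y‖ ≤ ‖x‖ + ‖y‖ := by
      simpa using norm_sub_le x y
    have h2 : ‖x‖ ≤ c1 x := hc1abs x
    have h3 : ‖y‖ ≤ c1 y := hc1abs y
    have h4 : (1:ℝ) ≤ c1 x := hc1pos x
    have h5 : (1:ℝ) ≤ c1 y := hc1pos y
    rw [hB2]
    simp only
    nlinarith
  set T : ℝ := (Mf.map fun x => (Mg.map fun y => B2 x y).prod).prod with hT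
  have hB2nonneg : ∀ x y : ℂ, 0 ≤ B2 x y := by
    intro x y
    have := hc1pos x; have := hc1pos y
    rw [hB2]; simp only; nlinarith
  have hTinner : ∀ x : ℂ, (Mg.map fun y => B2 x y).prod = 2 ^ m * c1 x ^ m * PB := by
    intro x
    have : (Mg.map fun y => B2 x y).prod = (Mg.map fun _ => 2 * c1 x).prod * (Mg.map c1).prod := by
      rw [← Multiset.prod_map_mul]
    rw [this, Multiset.map_const', Multiset.prod_replicate, ← hPB, hMgcard, mul_pow]
  have hTval : T = 2 ^ (n * m) * PA ^ m * PB ^ n := by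
    rw [hT]
    calc (Mf.map fun x => (Mg.map fun y => B2 x y).prod).prod
        = (Mf.map fun x => 2 ^ m * c1 x ^ m * PB).prod := by
          congr 1; exact Multiset.map_congr rfl (fun x _ => hTinner x)
      _ = ((Mf.map fun _ => (2:ℝ) ^ m).prod * (Mf.map fun x => c1 x ^ m).prod) *
            (Mf.map fun _ => PB).prod := by
          rw [← Multiset.prod_map_mul, ← Multiset.prod_map_mul]
      _ = 2 ^ (n * m) * PA ^ m * PB ^ n := by
          rw [Multiset.map_const', Multiset.prod_replicate, Multiset.map_const',
            Multiset.prod_replicate, Multiset.prod_map_pow, ← hPA, hMfcard, ← pow_mul,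
            Nat.mul_comm m n]
  -- E ≤ T / (2 c1α c1β) ≤ T stylebound : we show (Mf.map F).prod ≤ |α - β| * T
  have hE1 : (Mg'.map fun y => ‖α - y‖).prod ≤ (Mg'.map fun y => B2 α y).prod :=
    rprod_le_rprod _ _ _ (fun y _ => norm_nonneg _) (fun y _ => hpair α y)
  have hE2 : (Mf'.map F).prod ≤ (Mf'.map fun x => (Mg.map fun y => B2 x y).prod).prod := by
    apply rprod_le_rprod _ _ _ (fun x _ => hFnonneg x)
    intro x _
    apply rprod_le_rprod _ _ _ (fun y _ => norm_nonneg _) (fun y _ => hpair x y)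
  have hTsplit : T = (2 * c1 α * c1 β) *
      ((Mg'.map fun y => B2 α y).prod * (Mf'.map fun x => (Mg.map fun y => B2 x y).prod).prod) := by
    rw [hT, hMf', Multiset.map_cons, Multiset.prod_cons, hMg', Multiset.map_cons,
      Multiset.prod_cons]
    ring
  have hDT : (Mf.map F).prod ≤ ‖α - β‖ * T := by
    rw [hsplitD, hFα]
    have h2c : (1:ℝ) ≤ 2 * c1 α * c1 β := by
      have := hc1pos α; have := hc1pos β; nlinarith
    have hprodnn : 0 ≤ (Mg'.map fun y => ‖α - y‖).prod :=
      rprod_nonneg _ _ (fun y _ => norm_nonneg _)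
    have hprodnn2 : 0 ≤ (Mf'.map F).prod := rprod_nonneg _ _ (fun x _ => hFnonneg x)
    have hBnn : 0 ≤ (Mg'.map fun y => B2 α y).prod :=
      rprod_nonneg _ _ (fun y _ => hB2nonneg α y)
    have hBnn2 : 0 ≤ (Mf'.map fun x => (Mg.map fun y => B2 x y).prod).prod :=
      rprod_nonneg _ _ (fun x _ => rprod_nonneg _ _ (fun y _ => hB2nonneg x y))
    calc ‖α - β‖ * (Mg'.map fun y => ‖α - y‖).prod * (Mf'.map F).prod
        ≤ ‖α - β‖ *
            ((Mg'.map fun y => B2 α y).prod * (Mf'.map fun x => (Mg.map fun y => B2 x y).prod).prod) := by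
          rw [mul_assoc]
          apply mul_le_mul_of_nonneg_left _ (norm_nonneg _)
          exact mul_le_mul hE1 hE2 hprodnn2 hBnn
      _ ≤ ‖α - β‖ * T := by
          apply mul_le_mul_of_nonneg_left _ (norm_nonneg _)
          rw [hTsplit]
          nlinarith [mul_nonneg hBnn hBnn2]
  -- final chain
  have hfinal : 1 ≤ ‖α - β‖ * (2 ^ (n * m) * mahlerM α ^ m * mahlerM β ^ n) := by
    have hca0 : (0:ℝ) ≤ ca ^ m := pow_nonneg (by linarith) m
    have hcb0 : (0:ℝ) ≤ cb ^ n := pow_nonneg (by linarith) n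
    calc (1:ℝ) ≤ ‖((N : ℚ) : ℂ)‖ := habsN
      _ = ‖R‖ := by rw [hNR]
      _ = ca ^ m * cb ^ n * (Mf.map F).prod := habsR
      _ ≤ ca ^ m * cb ^ n * (‖α - β‖ * T) := by
          apply mul_le_mul_of_nonneg_left hDT (mul_nonneg hca0 hcb0)
      _ = ‖α - β‖ * (2 ^ (n * m) * (ca * PA) ^ m * (cb * PB) ^ n) := by
          rw [hTval, mul_pow, mul_pow]; ring
      _ = ‖α - β‖ * (2 ^ (n * m) * mahlerM α ^ m * mahlerM β ^ n) := by
          rw [hMα, hMβ]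
  have hdenpos : (0:ℝ) < 2 ^ (n * m) * mahlerM α ^ m * mahlerM β ^ n := by
    rw [hMα, hMβ]
    have h1 : (0:ℝ) < ca * PA := by nlinarith
    have h2 : (0:ℝ) < cb * PB := by nlinarith
    positivity
  rw [ge_iff_le, div_le_iff₀ hdenpos]
  linarith
end

section
/- Let {a_n} be a sequence of real numbers with limsup_{n→∞} a_n = ∞. Then for infinitely many k ∈ ℕ, one has a_{k+1} > (1 + 1/k²) · max_{1 ≤ n ≤ k} a_n. -/
open Polynomial Filter

/-!
If the set were finite, then from some `N` on every `a (k+1)` would be at most `(1 + 1/k²)` times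
an earlier term, so the running maximum `M k` of the positive parts would satisfy
`M (k+1) ≤ (1 + 1/k²) M k`. Since `∏ (1 + 1/k²) ≤ exp (∑ 1/k²) < ∞`, `M` and hence `a` would be
bounded above, contradicting `limsup a = ∞`.
-/

section GrowthBound

variable {u : ℕ → ℝ} {N : ℕ}

theorem le_mul_prod_Ico_of_le_mul {c : ℕ → ℝ} (hc : ∀ k, 0 ≤ c k)
    (h : ∀ k ≥ N, u (k + 1) ≤ c k * u k) {k : ℕ} (hk : N ≤ k) :
    u k ≤ u N * ∏ i ∈ Finset.Ico N k, c i := by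
  induction k, hk using Nat.le_induction with
  | base => simp
  | succ k hk ih =>
    calc u (k + 1) ≤ c k * u k := h k hk
      _ ≤ c k * (u N * ∏ i ∈ Finset.Ico N k, c i) := mul_le_mul_of_nonneg_left ih (hc k)
      _ = u N * ∏ i ∈ Finset.Ico N (k + 1), c i := by rw [Finset.prod_Ico_succ_top hk]; ring

theorem le_mul_exp_tsum_of_le_one_add_mul {ε : ℕ → ℝ} (hu : 0 ≤ u N) (hε : ∀ k, 0 ≤ ε k)
    (hsum : Summable ε) (h : ∀ k ≥ N, u (k + 1) ≤ (1 + ε k) * u k) {k : ℕ} (hk : N ≤ k) :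
    u k ≤ u N * Real.exp (∑' i, ε i) :=
  calc u k ≤ u N * ∏ i ∈ Finset.Ico N k, (1 + ε i) :=
        le_mul_prod_Ico_of_le_mul (fun i => by linarith [hε i]) h hk
    _ ≤ u N * Real.exp (∑ i ∈ Finset.Ico N k, ε i) := by
        gcongr; exact Real.prod_one_add_le_exp_sum _ hε
    _ ≤ u N * Real.exp (∑' i, ε i) := by
        gcongr; exact hsum.sum_le_tsum _ fun i _ => hε i

end GrowthBound

section RunningMax

variable (a : ℕ → ℝ)

theorem partialSups_max_zero_nonneg (k : ℕ) : 0 ≤ partialSups (fun i => max (a i) 0) k :=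
  (le_max_right _ _).trans (le_partialSups_of_le (fun i => max (a i) 0) (Nat.zero_le k))

variable {a}

theorem partialSups_max_zero_succ_le {c : ℝ} (hc : 1 ≤ c) {k n : ℕ} (hnk : n ≤ k)
    (hn : a (k + 1) ≤ c * a n) :
    partialSups (fun i => max (a i) 0) (k + 1) ≤ c * partialSups (fun i => max (a i) 0) k := by
  set b := fun i => max (a i) 0
  have hM := partialSups_max_zero_nonneg a k
  apply partialSups_le
  intro j hj
  rcases Nat.le_succ_iff.mp hj with hjk | rfl
  · exact (le_partialSups_of_le b hjk).trans (le_mul_of_one_le_left hM hc)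
  · refine max_le (hn.trans ?_) (by positivity)
    exact mul_le_mul_of_nonneg_left ((le_max_left _ _).trans (le_partialSups_of_le b hnk))
      (by linarith)

end RunningMax

theorem frequently_gt_max (a : ℕ → ℝ)
    (h : limsup (fun n => (a n : EReal)) atTop = ⊤) :
    {k : ℕ | 1 ≤ k ∧ ∀ n, 1 ≤ n → n ≤ k →
      (1 + 1 / (k : ℝ) ^ 2) * a n < a (k + 1)}.Infinite := by
  by_contra hfin
  obtain ⟨K, hK⟩ := (Set.not_infinite.mp hfin).bddAbove
  set M := partialSups fun i => max (a i) 0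
  have hstep : ∀ k ≥ K + 1, M (k + 1) ≤ (1 + 1 / (k : ℝ) ^ 2) * M k := by
    intro k hk
    have hk_not : ¬(1 ≤ k ∧ ∀ n, 1 ≤ n → n ≤ k → (1 + 1 / (k : ℝ) ^ 2) * a n < a (k + 1)) :=
      fun hmem => by have := hK hmem; omega
    push Not at hk_not
    obtain ⟨n, -, hnk, hn⟩ := hk_not (by omega)
    exact partialSups_max_zero_succ_le (le_add_of_nonneg_right (by positivity)) hnk hn
  set C := M (K + 1) * Real.exp (∑' i : ℕ, 1 / (i : ℝ) ^ 2)
  have hbound : ∀ k ≥ K + 1, a k ≤ C :=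
    fun k hk => (le_max_left _ _).trans <| (le_partialSups _ k).trans <|
      le_mul_exp_tsum_of_le_one_add_mul (partialSups_max_zero_nonneg a _) (fun _ => by positivity)
        (Real.summable_one_div_nat_pow.2 one_lt_two) hstep hk
  have hlimsup : limsup (fun n => (a n : EReal)) atTop ≤ C :=
    limsup_le_of_le (by isBoundedDefault)
      ((eventually_ge_atTop (K + 1)).mono fun k hk => EReal.coe_le_coe_iff.2 (hbound k hk))
  exact (EReal.coe_lt_top C).not_ge (h ▸ hlimsup)
end

section
/- Let α be an algebraic number of degree at most D and let α_1, ..., α_N be algebraic integers of degree at most d with α ≠ α(N) := [0; α_1, ..., α_N] and α not conjugate to α(N). Then |α − α(N)| · (2^{2N−1} H(α) ∏_{n=1}^N house(α_n))^{D d^N} ≥ 1. -/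
open Polynomial Filter

/-!
Write `[0; α_1, …, α_N] = p / q` with the continuants `p, q`. They are algebraic integers of a
number field `K` of degree at most `d ^ N`, and `‖σ p‖ + ‖σ q‖ ≤ 2 ^ N ∏ house α_n` for every
embedding `σ : K → ℂ`. If `F` is the homogenized primitive integer minimal polynomial of `α`, then
`γ = F(p, q)` is an algebraic integer of `K`, nonzero because `p / q` is not a conjugate of `α`,
so its norm `∏_σ σ γ` is a nonzero integer. Factoring `F` over the conjugates of `α` bounds every
`‖σ γ‖` by `E = (2 ^ N ∏ house α_n) ^ deg α · M(α)`, and the factor `p - α q` of the given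
embedding contributes an extra `|α - p / q|`. Hence `1 ≤ |α - p / q| · E ^ [K : ℚ]`, which is
the claim since `M(α) = H(α) ^ deg α`.
-/

/-- The continuants: `cfNumDen [a₁, …, a_N] = (p, q)` with `[0; a₁, …, a_N] = p / q`. -/
def cfNumDen {A : Type*} [CommRing A] : List A → A × A
  | [] => (0, 1)
  | a :: t => ((cfNumDen t).2, a * (cfNumDen t).2 + (cfNumDen t).1)

section Continuants

variable {A : Type*} [CommRing A]

theorem cfNumDen_map {B : Type*} [CommRing B] (f : A →+* B) (l : List A) :
    cfNumDen (l.map f) = (f (cfNumDen l).1, f (cfNumDen l).2) := by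
  induction l with
  | nil => simp [cfNumDen]
  | cons a t ih => simp [cfNumDen, ih]

theorem isIntegral_cfNumDen {R : Type*} [CommRing R] [Algebra R A] {l : List A}
    (hl : ∀ x ∈ l, IsIntegral R x) :
    IsIntegral R (cfNumDen l).1 ∧ IsIntegral R (cfNumDen l).2 := by
  induction l with
  | nil => exact ⟨isIntegral_zero, isIntegral_one⟩
  | cons a t ih =>
    obtain ⟨hp, hq⟩ := ih fun x hx => hl x (List.mem_cons_of_mem a hx)
    exact ⟨hq, ((hl a List.mem_cons_self).mul hq).add hp⟩

theorem cfVal_eq_div {K : Type*} [Field K] {l : List K}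
    (hl : ∀ t ∈ l.tails, t ≠ [] → cfVal t ≠ 0) :
    (cfNumDen l).2 ≠ 0 ∧ cfVal l = (cfNumDen l).1 / (cfNumDen l).2 := by
  induction l with
  | nil => simp [cfNumDen, cfVal]
  | cons a t ih =>
    obtain ⟨hq, hval⟩ := ih fun t' ht' => hl t' (List.mem_cons_of_mem _ ht')
    have hden : a + cfVal t ≠ 0 := fun h0 => hl (a :: t) List.mem_cons_self
      (List.cons_ne_nil a t) (by simp [cfVal, h0])
    rw [hval] at hden
    have hden' : a * (cfNumDen t).2 + (cfNumDen t).1 ≠ 0 := by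
      rw [show a * (cfNumDen t).2 + (cfNumDen t).1 = (a + (cfNumDen t).1 / (cfNumDen t).2) *
        (cfNumDen t).2 by field_simp]
      exact mul_ne_zero hden hq
    refine ⟨hden', ?_⟩
    rw [cfVal, hval]
    simp only [cfNumDen]
    field_simp

end Continuants

theorem norm_cfNumDen_add_le {A : Type*} [SeminormedCommRing A] [NormOneClass A] (l : List A) :
    ‖(cfNumDen l).1‖ + ‖(cfNumDen l).2‖ ≤ 2 ^ l.length * (l.map fun a => max 1 ‖a‖).prod := by
  induction l with
  | nil => simp [cfNumDen]
  | cons a t ih =>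
    set p := (cfNumDen t).1
    set q := (cfNumDen t).2
    have hstep : ‖q‖ + ‖a * q + p‖ ≤ 2 * max 1 ‖a‖ * (‖p‖ + ‖q‖) := by
      have := norm_add_le (a * q) p
      have := norm_mul_le a q
      nlinarith [le_max_left 1 ‖a‖, le_max_right 1 ‖a‖, norm_nonneg p, norm_nonneg q]
    calc ‖(cfNumDen (a :: t)).1‖ + ‖(cfNumDen (a :: t)).2‖ = ‖q‖ + ‖a * q + p‖ := rfl
      _ ≤ 2 * max 1 ‖a‖ * (2 ^ t.length * (t.map fun a => max 1 ‖a‖).prod) :=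
        hstep.trans (by gcongr)
      _ = _ := by simp only [List.length_cons, List.map_cons, List.prod_cons]; ring

section Conjugates

theorem mem_conjugates_iff {x z : ℂ} (hx : IsIntegral ℚ x) :
    z ∈ conjugates x ↔ aeval z (minpoly ℚ x) = 0 := by
  rw [conjugates, ← aroots_def, mem_aroots]
  exact and_iff_right (minpoly.ne_zero hx)

theorem minpoly_eq_of_mem_conjugates {x z : ℂ} (hz : z ∈ conjugates x) :
    minpoly ℚ z = minpoly ℚ x := by
  have hx : IsIntegral ℚ x := by
    by_contra hx
    simp [conjugates, minpoly.eq_zero hx] at hz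
  exact (minpoly.eq_of_irreducible_of_monic (minpoly.irreducible hx)
    ((mem_conjugates_iff hx).1 hz) (minpoly.monic hx)).symm

theorem card_conjugates (x : ℂ) : Multiset.card (conjugates x) = (minpoly ℚ x).natDegree :=
  IsAlgClosed.card_roots_map_eq_natDegree_of_injective _ (algebraMap ℚ ℂ).injective

variable {K : Type*} [Field K] [NumberField K]

theorem norm_embedding_le_house_embedding (σ σ₀ : K →+* ℂ) (x : K) : ‖σ x‖ ≤ house (σ₀ x) := by
  have hx : IsIntegral ℚ x := Algebra.IsIntegral.isIntegral x
  have hconj : σ x ∈ conjugates (σ₀ x) := by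
    refine (mem_conjugates_iff (hx.map σ₀.toRatAlgHom)).2 ?_
    rw [minpoly.algHom_eq σ₀.toRatAlgHom σ₀.injective x]
    exact (aeval_algHom_apply σ.toRatAlgHom x _).trans (by simp)
  exact_mod_cast Multiset.le_sup (Multiset.mem_map_of_mem (fun z => ‖z‖₊) hconj)

theorem one_le_house_embedding (σ₀ : K →+* ℂ) {x : K} (hx : IsIntegral ℤ x) (hx0 : x ≠ 0) :
    1 ≤ house (σ₀ x) := by
  refine (NumberField.one_le_house_of_isIntegral hx hx0).trans ?_
  rw [NumberField.house_eq_sup']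
  exact NNReal.coe_le_coe.2 (Finset.sup'_le _ _ fun σ _ =>
    NNReal.coe_le_coe.1 (norm_embedding_le_house_embedding σ σ₀ x))

end Conjugates

section MahlerMeasure

theorem roots_map_intMinPoly {x : ℂ} (hx : IsAlgebraic ℚ x) :
    ((intMinPoly x).map (algebraMap ℤ ℂ)).roots = conjugates x := by
  set P := IsLocalization.integerNormalization (nonZeroDivisors ℤ) (minpoly ℚ x)
  obtain ⟨b, hbM, hb⟩ := IsLocalization.integerNormalization_spec (nonZeroDivisors ℤ) (minpoly ℚ x)
  have hP : P ≠ 0 := by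
    rw [Ne, IsFractionRing.integerNormalization_eq_zero_iff]
    exact minpoly.ne_zero hx.isIntegral
  have hcontent : (P.content : ℂ) ≠ 0 := by
    exact_mod_cast mt content_eq_zero_iff.1 hP
  have hb0 : (b : ℂ) ≠ 0 := by exact_mod_cast nonZeroDivisors.ne_zero hbM
  calc ((intMinPoly x).map (algebraMap ℤ ℂ)).roots
      = (C (P.content : ℂ) * (intMinPoly x).map (algebraMap ℤ ℂ)).roots :=
        (roots_C_mul _ hcontent).symm
    _ = (P.map (algebraMap ℤ ℂ)).roots := by
        conv_rhs => rw [P.eq_C_content_mul_primPart]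
        simp [intMinPoly, P]
    _ = (C (b : ℂ) * (minpoly ℚ x).map (algebraMap ℚ ℂ)).roots := by
        rw [IsScalarTower.algebraMap_eq ℤ ℚ ℂ, ← Polynomial.map_map, hb]
        simp
    _ = conjugates x := roots_C_mul _ hb0

theorem natDegree_intMinPoly {x : ℂ} (hx : IsAlgebraic ℚ x) :
    (intMinPoly x).natDegree = (minpoly ℚ x).natDegree := by
  rw [← card_conjugates, ← roots_map_intMinPoly hx,
    IsAlgClosed.card_roots_map_eq_natDegree_of_injective _ (algebraMap ℤ ℂ).injective_int]

theorem mahlerM_eq_prod_conjugates {x : ℂ} (hx : IsAlgebraic ℚ x) :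
    mahlerM x =
      |((intMinPoly x).leadingCoeff : ℝ)| * ((conjugates x).map fun z => max 1 ‖z‖).prod := by
  rw [mahlerM, roots_map_intMinPoly hx, Int.cast_abs]

theorem one_le_mahlerM (x : ℂ) : 1 ≤ mahlerM x := by
  have hlead : (1 : ℝ) ≤ ((|(intMinPoly x).leadingCoeff| : ℤ) : ℝ) := by
    exact_mod_cast Int.one_le_abs (leadingCoeff_ne_zero.2 (primPart_ne_zero _))
  have hprod : (1 : ℝ) ≤ ((((intMinPoly x).map (algebraMap ℤ ℂ)).roots).map
      fun z => max 1 ‖z‖).prod :=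
    Multiset.one_le_prod fun _ h => by
      obtain ⟨z, -, rfl⟩ := Multiset.mem_map.1 h
      exact le_max_left _ _
  exact one_le_mul_of_one_le_of_one_le hlead hprod

theorem one_le_weilHeight (x : ℂ) : 1 ≤ weilHeight x :=
  Real.one_le_rpow (one_le_mahlerM x) (by positivity)

theorem weilHeight_pow_natDegree {x : ℂ} (hx : IsAlgebraic ℚ x) :
    weilHeight x ^ (minpoly ℚ x).natDegree = mahlerM x := by
  have hr : ((minpoly ℚ x).natDegree : ℝ) ≠ 0 :=
    Nat.cast_ne_zero.2 (minpoly.natDegree_pos hx.isIntegral).ne'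
  rw [weilHeight, ← Real.rpow_natCast, ← Real.rpow_mul (by linarith [one_le_mahlerM x]),
    one_div_mul_cancel hr, Real.rpow_one]

end MahlerMeasure

section Homogenize

theorem eval_homogenize_natDegree_eq_prod {k : Type*} [Field k] {f : k[X]}
    (hf : Multiset.card f.roots = f.natDegree) {u v : k} (hv : v ≠ 0) :
    MvPolynomial.eval ![u, v] (f.homogenize f.natDegree) =
      f.leadingCoeff * (f.roots.map fun z => u - z * v).prod := by
  have heval : f.eval (u / v) = f.leadingCoeff * (f.roots.map fun z => u / v - z).prod := by
    conv_lhs => rw [← C_leadingCoeff_mul_prod_multiset_X_sub_C hf]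
    simp [eval_multiset_prod, Multiset.map_map]
  rw [eval_homogenize le_rfl _ (by simpa using hv)]
  simp only [Matrix.cons_val_zero, Matrix.cons_val_one]
  rw [heval, ← hf, mul_assoc, ← Multiset.prod_replicate, ← Multiset.map_const',
    ← Multiset.prod_map_mul]
  congr 2
  refine Multiset.map_congr rfl fun z _ => ?_
  field_simp

theorem aeval_homogenize_intMinPoly {x : ℂ} (hx : IsAlgebraic ℚ x) {u v : ℂ} (hv : v ≠ 0) :
    MvPolynomial.aeval ![u, v] ((intMinPoly x).homogenize (minpoly ℚ x).natDegree) =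
      (intMinPoly x).leadingCoeff * ((conjugates x).map fun z => u - z * v).prod := by
  have hdeg : ((intMinPoly x).map (algebraMap ℤ ℂ)).natDegree = (minpoly ℚ x).natDegree := by
    rw [natDegree_map_eq_of_injective (algebraMap ℤ ℂ).injective_int, natDegree_intMinPoly hx]
  rw [MvPolynomial.aeval_def, MvPolynomial.eval₂_eq_eval_map, ← homogenize_map, ← hdeg,
    eval_homogenize_natDegree_eq_prod IsAlgClosed.card_roots_eq_natDegree hv,
    leadingCoeff_map_of_injective (algebraMap ℤ ℂ).injective_int, roots_map_intMinPoly hx]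
  rfl

theorem map_aeval_vecCons {A B : Type*} [CommRing A] [CommRing B] (σ : A →+* B)
    (P : MvPolynomial (Fin 2) ℤ) (u v : A) :
    σ (MvPolynomial.aeval ![u, v] P) = MvPolynomial.aeval ![σ u, σ v] P := by
  rw [← RingHom.toIntAlgHom_coe σ, MvPolynomial.comp_aeval_apply]
  congr 2
  funext i
  fin_cases i <;> rfl

theorem isIntegral_aeval_vecCons {A : Type*} [CommRing A] (P : MvPolynomial (Fin 2) ℤ) {u v : A}
    (hu : IsIntegral ℤ u) (hv : IsIntegral ℤ v) : IsIntegral ℤ (MvPolynomial.aeval ![u, v] P) := by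
  have : Algebra.adjoin ℤ (Set.range ![u, v]) ≤ integralClosure ℤ A :=
    Algebra.adjoin_le (by rintro _ ⟨i, rfl⟩; fin_cases i <;> assumption)
  exact this (MvPolynomial.aeval_range (R := ℤ) ![u, v] ▸ ⟨P, rfl⟩)

end Homogenize

section Liouville

theorem norm_sub_mul_le_max_one {A : Type*} [SeminormedRing A] (u v z : A) :
    ‖u - z * v‖ ≤ (‖u‖ + ‖v‖) * max 1 ‖z‖ := by
  have h1 := norm_sub_le u (z * v)
  have h2 := norm_mul_le z v
  nlinarith [le_max_left 1 ‖z‖, le_max_right 1 ‖z‖, norm_nonneg u, norm_nonneg v, norm_nonneg z]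

theorem prod_norm_sub_mul_le_max_one {A : Type*} [SeminormedRing A] (s : Multiset A) (u v : A) :
    (s.map fun z => ‖u - z * v‖).prod ≤
      (‖u‖ + ‖v‖) ^ Multiset.card s * (s.map fun z => max 1 ‖z‖).prod := by
  calc (s.map fun z => ‖u - z * v‖).prod ≤ (s.map fun z => (‖u‖ + ‖v‖) * max 1 ‖z‖).prod :=
        Multiset.prod_map_le_prod_map₀ _ _ (fun _ _ => norm_nonneg _) fun z _ =>
          norm_sub_mul_le_max_one u v z
    _ = _ := by rw [Multiset.prod_map_mul, Multiset.map_const', Multiset.prod_replicate]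

theorem norm_aeval_homogenize_intMinPoly {x : ℂ} (hx : IsAlgebraic ℚ x) {u v : ℂ} (hv : v ≠ 0) :
    ‖MvPolynomial.aeval ![u, v] ((intMinPoly x).homogenize (minpoly ℚ x).natDegree)‖ =
      |((intMinPoly x).leadingCoeff : ℝ)| * ((conjugates x).map fun z => ‖u - z * v‖).prod := by
  rw [aeval_homogenize_intMinPoly hx hv, norm_mul, Complex.norm_intCast]
  exact congrArg _ ((map_multiset_prod (normHom : ℂ →*₀ ℝ) _).trans (by rw [Multiset.map_map]; rfl))

theorem norm_aeval_homogenize_intMinPoly_le {x : ℂ} (hx : IsAlgebraic ℚ x) {u v : ℂ}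
    (hv : v ≠ 0) :
    ‖MvPolynomial.aeval ![u, v] ((intMinPoly x).homogenize (minpoly ℚ x).natDegree)‖ ≤
      (‖u‖ + ‖v‖) ^ (minpoly ℚ x).natDegree * mahlerM x := by
  rw [norm_aeval_homogenize_intMinPoly hx hv, mahlerM_eq_prod_conjugates hx, ← card_conjugates,
    mul_left_comm]
  gcongr
  exact prod_norm_sub_mul_le_max_one _ u v

theorem norm_aeval_homogenize_intMinPoly_le_mul_norm_sub {x : ℂ} (hx : IsAlgebraic ℚ x)
    {u v : ℂ} (hv : v ≠ 0) :
    ‖MvPolynomial.aeval ![u, v] ((intMinPoly x).homogenize (minpoly ℚ x).natDegree)‖ ≤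
      ‖x - u / v‖ * ((‖u‖ + ‖v‖) ^ (minpoly ℚ x).natDegree * mahlerM x) := by
  have hself : x ∈ conjugates x := (mem_conjugates_iff hx.isIntegral).2 (minpoly.aeval ℚ x)
  have hfirst : ‖u - x * v‖ ≤ ‖x - u / v‖ * ((‖u‖ + ‖v‖) * max 1 ‖x‖) := by
    rw [show u - x * v = v * (u / v - x) by field_simp, norm_mul, norm_sub_rev, mul_comm]
    gcongr
    nlinarith [le_max_left 1 ‖x‖, norm_nonneg u, norm_nonneg v]
  have hrest := prod_norm_sub_mul_le_max_one ((conjugates x).erase x) u v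
  rw [norm_aeval_homogenize_intMinPoly hx hv, mahlerM_eq_prod_conjugates hx, ← card_conjugates,
    ← Multiset.cons_erase hself]
  simp only [Multiset.map_cons, Multiset.prod_cons, Multiset.card_cons, pow_succ]
  calc _ ≤ |((intMinPoly x).leadingCoeff : ℝ)| * ((‖x - u / v‖ * ((‖u‖ + ‖v‖) * max 1 ‖x‖)) *
        ((‖u‖ + ‖v‖) ^ Multiset.card ((conjugates x).erase x) *
          (((conjugates x).erase x).map fun z => max 1 ‖z‖).prod)) := by
        gcongr
        exact Multiset.prod_map_nonneg fun _ _ => norm_nonneg _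
    _ = _ := by ring

end Liouville

section NumberField

variable {K : Type*} [Field K] [NumberField K]

theorem one_le_norm_algebraNorm {γ : K} (hγ : IsIntegral ℤ γ) (hγ0 : γ ≠ 0) :
    1 ≤ ‖Algebra.norm ℚ γ‖ := by
  set γ' : NumberField.RingOfIntegers K := ⟨γ, hγ⟩
  have hγ'0 : γ' ≠ 0 := fun h => hγ0 (congrArg Subtype.val h)
  show 1 ≤ ‖Algebra.norm ℚ (γ' : K)‖
  rw [← Algebra.coe_norm_int γ', Int.norm_cast_rat, Int.norm_eq_abs]
  exact_mod_cast Int.one_le_abs (Algebra.norm_ne_zero_iff.2 hγ'0)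

theorem one_le_mul_pow_finrank_of_norm_embedding_le {γ : K} (hγ : IsIntegral ℤ γ) (hγ0 : γ ≠ 0)
    (σ₀ : K →+* ℂ) {c E : ℝ} (hσ₀ : ‖σ₀ γ‖ ≤ c * E) (hσ : ∀ σ : K →+* ℂ, ‖σ γ‖ ≤ E) :
    1 ≤ c * E ^ Module.finrank ℚ K := by
  have hhouse : NumberField.house γ ≤ E := by
    rw [NumberField.house, pi_norm_le_iff_of_nonneg ((norm_nonneg _).trans (hσ σ₀))]
    exact hσ
  calc 1 ≤ ‖Algebra.norm ℚ γ‖ := one_le_norm_algebraNorm hγ hγ0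
    _ ≤ ‖σ₀ γ‖ * NumberField.house γ ^ (Module.finrank ℚ K - 1) :=
        NumberField.norm_norm_le_norm_mul_house_pow γ σ₀
    _ ≤ (c * E) * E ^ (Module.finrank ℚ K - 1) := by
        have := NumberField.house_nonneg γ
        gcongr
        exact (norm_nonneg _).trans hσ₀
    _ = c * E ^ Module.finrank ℚ K := by
        rw [mul_assoc, ← pow_succ', Nat.sub_add_cancel Module.finrank_pos]

theorem one_le_norm_sub_div_mul_pow_finrank (σ₀ : K →+* ℂ) {α : ℂ} (hα : IsAlgebraic ℚ α)
    {p q : K} (hp : IsIntegral ℤ p) (hq : IsIntegral ℤ q) (hq0 : q ≠ 0)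
    (hpq : σ₀ p / σ₀ q ∉ conjugates α) {B : ℝ} (hB : ∀ σ : K →+* ℂ, ‖σ p‖ + ‖σ q‖ ≤ B) :
    1 ≤ ‖α - σ₀ p / σ₀ q‖ *
      (B ^ (minpoly ℚ α).natDegree * mahlerM α) ^ Module.finrank ℚ K := by
  set γ : K := MvPolynomial.aeval ![p, q] ((intMinPoly α).homogenize (minpoly ℚ α).natDegree)
  have hσq (σ : K →+* ℂ) : σ q ≠ 0 := (map_ne_zero σ).2 hq0
  have hpow (σ : K →+* ℂ) : (‖σ p‖ + ‖σ q‖) ^ (minpoly ℚ α).natDegree * mahlerM α ≤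
      B ^ (minpoly ℚ α).natDegree * mahlerM α :=
    mul_le_mul_of_nonneg_right (pow_le_pow_left₀ (by positivity) (hB σ) _)
      (zero_le_one.trans (one_le_mahlerM α))
  have hγ0 : γ ≠ 0 := by
    intro hγ
    have h : σ₀ γ = _ := map_aeval_vecCons σ₀ _ p q
    rw [hγ, map_zero, aeval_homogenize_intMinPoly hα (hσq σ₀), eq_comm, mul_eq_zero,
      Multiset.prod_eq_zero_iff] at h
    obtain ⟨z, hz, hz0⟩ := Multiset.mem_map.1 <|
      h.resolve_left (by exact_mod_cast leadingCoeff_ne_zero.2 (primPart_ne_zero _))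
    exact hpq (eq_div_of_mul_eq (hσq σ₀) (sub_eq_zero.1 hz0).symm ▸ hz)
  refine one_le_mul_pow_finrank_of_norm_embedding_le (isIntegral_aeval_vecCons _ hp hq) hγ0 σ₀
    ?_ fun σ => ?_
  · rw [map_aeval_vecCons]
    exact (norm_aeval_homogenize_intMinPoly_le_mul_norm_sub hα (hσq σ₀)).trans
      (mul_le_mul_of_nonneg_left (hpow σ₀) (norm_nonneg _))
  · rw [map_aeval_vecCons]
    exact (norm_aeval_homogenize_intMinPoly_le hα (hσq σ)).trans (hpow σ)

end NumberField

theorem norm_embedding_cfNumDen_le {K : Type*} [Field K] [NumberField K] (σ σ₀ : K →+* ℂ)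
    {l : List K} (hl : ∀ x ∈ l, IsIntegral ℤ x ∧ x ≠ 0) :
    ‖σ (cfNumDen l).1‖ + ‖σ (cfNumDen l).2‖ ≤ 2 ^ l.length * ((l.map σ₀).map house).prod := by
  have h := norm_cfNumDen_add_le (l.map σ)
  rw [cfNumDen_map, List.length_map, List.map_map] at h
  rw [List.map_map]
  refine h.trans (mul_le_mul_of_nonneg_left (List.prod_map_le_prod_map₀ _ _
    (fun _ _ => zero_le_one.trans (le_max_left _ _)) fun x hx => max_le ?_ ?_) (by positivity))
  · exact one_le_house_embedding σ₀ (hl x hx).1 (hl x hx).2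
  · exact norm_embedding_le_house_embedding σ σ₀ x

theorem one_le_norm_sub_cfVal_mul_pow_finrank {K : Type*} [Field K] [NumberField K]
    (σ₀ : K →+* ℂ) {α : ℂ} (hα : IsAlgebraic ℚ α) {l : List K}
    (hl : ∀ x ∈ l, IsIntegral ℤ x ∧ x ≠ 0) (hcf : ∀ t ∈ (l.map σ₀).tails, t ≠ [] → cfVal t ≠ 0)
    (hconj : cfVal (l.map σ₀) ∉ conjugates α) :
    1 ≤ ‖α - cfVal (l.map σ₀)‖ * (2 ^ l.length * weilHeight α * ((l.map σ₀).map house).prod) ^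
      ((minpoly ℚ α).natDegree * Module.finrank ℚ K) := by
  obtain ⟨hp, hq⟩ := isIntegral_cfNumDen fun x hx => (hl x hx).1
  obtain ⟨hq0, hval⟩ := cfVal_eq_div hcf
  rw [cfNumDen_map] at hq0 hval
  dsimp only at hq0 hval
  rw [hval] at hconj ⊢
  have key := one_le_norm_sub_div_mul_pow_finrank σ₀ hα hp hq ((map_ne_zero σ₀).1 hq0) hconj
    fun σ => norm_embedding_cfNumDen_le σ σ₀ hl
  rwa [← weilHeight_pow_natDegree hα, ← mul_pow, ← pow_mul, mul_right_comm (2 ^ l.length : ℝ)]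
    at key

open IntermediateField in
theorem exists_intermediateField_finrank_le_pow (d : ℕ) {l : List ℂ}
    (hl : ∀ x ∈ l, IsIntegral ℚ x ∧ (minpoly ℚ x).natDegree ≤ d) :
    ∃ K : IntermediateField ℚ ℂ, FiniteDimensional ℚ K ∧ (∀ x ∈ l, x ∈ K) ∧
      Module.finrank ℚ K ≤ d ^ l.length := by
  induction l with
  | nil => exact ⟨⊥, inferInstance, by simp, by simp⟩
  | cons a t ih =>
    obtain ⟨K, hK, hmem, hrank⟩ := ih fun x hx => hl x (List.mem_cons_of_mem a hx)
    obtain ⟨ha, had⟩ := hl a List.mem_cons_self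
    have := adjoin.finiteDimensional ha
    refine ⟨ℚ⟮a⟯ ⊔ K, inferInstance, ?_, ?_⟩
    · intro x hx
      rcases List.mem_cons.1 hx with rfl | hx
      · exact le_sup_left (b := K) (mem_adjoin_simple_self ℚ x)
      · exact le_sup_right (a := ℚ⟮a⟯) (hmem x hx)
    · calc Module.finrank ℚ ↥(ℚ⟮a⟯ ⊔ K) ≤ Module.finrank ℚ ℚ⟮a⟯ * Module.finrank ℚ K :=
            finrank_sup_le _ _
        _ ≤ d * d ^ t.length := Nat.mul_le_mul ((adjoin.finrank ha).trans_le had) hrank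
        _ = d ^ (a :: t).length := (pow_succ' _ _).symm

theorem cf_liouville_estimate_general (d D : ℕ) (α : ℂ) (hα : IsAlgebraic ℚ α)
    (hD : (minpoly ℚ α).natDegree ≤ D) (l : List ℂ) (hl : l ≠ [])
    (h1 : ∀ x ∈ l, x ≠ 0 ∧ IsIntegral ℤ x ∧ (minpoly ℚ x).natDegree ≤ d)
    (h2 : ∀ t ∈ l.tails, t ≠ [] → cfVal t ≠ 0)
    (hnc : minpoly ℚ α ≠ minpoly ℚ (cfVal l)) :
    1 ≤ ‖α - cfVal l‖ *
      ((2 : ℝ) ^ (2 * l.length - 1) * weilHeight α * (l.map house).prod) ^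
        (D * d ^ l.length) := by
  obtain ⟨K, hK, hlK, hrank⟩ := exists_intermediateField_finrank_le_pow d fun x hx =>
    ⟨(h1 x hx).2.1.tower_top, (h1 x hx).2.2⟩
  have : NumberField K := ⟨⟩
  lift l to List K using hlK
  set σ₀ : K →+* ℂ := algebraMap K ℂ
  rw [show l.map Subtype.val = l.map σ₀ from rfl] at *
  rw [List.length_map] at hrank ⊢
  have hl' (x : K) (hx : x ∈ l) : IsIntegral ℤ x ∧ x ≠ 0 := by
    obtain ⟨hx0, hxint, -⟩ := h1 (σ₀ x) (List.mem_map_of_mem hx)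
    exact ⟨(isIntegral_algebraMap_iff σ₀.injective).1 hxint, (map_ne_zero σ₀).1 hx0⟩
  have key := one_le_norm_sub_cfVal_mul_pow_finrank σ₀ hα hl' h2
    fun h => hnc (minpoly_eq_of_mem_conjugates h).symm
  have hN : l.length ≤ 2 * l.length - 1 := by
    have := List.length_pos_iff.2 (by simpa using hl); omega
  have hP : 1 ≤ ((l.map σ₀).map house).prod := List.one_le_prod fun _ h => by
    obtain ⟨x, hx, rfl⟩ := List.mem_map.1 (List.map_map ▸ h)
    exact one_le_house_embedding σ₀ (hl' x hx).1 (hl' x hx).2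
  have hH := one_le_weilHeight α
  have hbase (n : ℕ) : 1 ≤ (2 : ℝ) ^ n * weilHeight α * ((l.map σ₀).map house).prod :=
    one_le_mul_of_one_le_of_one_le (one_le_mul_of_one_le_of_one_le (one_le_pow₀ one_le_two) hH) hP
  refine key.trans (mul_le_mul_of_nonneg_left ?_ (norm_nonneg _))
  refine (pow_le_pow_left₀ (zero_le_one.trans (hbase _)) ?_ _).trans
    (pow_le_pow_right₀ (hbase _) (Nat.mul_le_mul hD hrank))
  gcongr
  norm_num

theorem cf_liouville_estimate (d D : ℕ) (α : ℂ) (hα : IsAlgebraic ℚ α)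
    (hD : (minpoly ℚ α).natDegree ≤ D) (l : List ℂ) (hl : l ≠ [])
    (h1 : ∀ x ∈ l, x ≠ 0 ∧ IsIntegral ℤ x ∧ (minpoly ℚ x).natDegree ≤ d)
    (h2 : ∀ t ∈ l.tails, t ≠ [] → cfVal t ≠ 0)
    (hne : α ≠ cfVal l) (hnc : minpoly ℚ α ≠ minpoly ℚ (cfVal l)) :
    1 ≤ ‖α - cfVal l‖ *
      ((2 : ℝ) ^ (2 * l.length - 1) * weilHeight α * (l.map house).prod) ^
        (D * d ^ l.length) :=
  cf_liouville_estimate_general d D α hα hD l hl h1 h2 hnc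
end

section
/- For all sufficiently large N ∈ ℕ and all integers d ≥ 2, one has log(1 + 1/N²) ≥ (2N² − 1)/(2N⁴), and moreover for any D ∈ ℕ, d^N · (∏_{n=1}^{N−1}(D d^n + 1)) · (2N² − 1)/(2N⁴) ≥ log(2) · (d+1)^N, hence (1 + 1/N²)^{D d^N ∏_{i=1}^{N−1}(D d^i + 1)} > 2^{D (d+1)^N}. -/
open Polynomial Filter

lemma four_sq_le_two_pow : ∀ n : ℕ, 9 ≤ n → 4 * n ^ 2 ≤ 2 ^ n := by
  intro n hn
  induction n, hn using Nat.le_induction with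
  | base => norm_num
  | succ n hn ih =>
    have : 4 * (n+1)^2 ≤ 2 * (4 * n^2) := by nlinarith
    calc 4 * (n+1)^2 ≤ 2 * (4 * n^2) := this
    _ ≤ 2 * 2 ^ n := by omega
    _ = 2 ^ (n+1) := by ring

lemma sum_icc_ge (N : ℕ) (hN : 10 ≤ N) : 2 * N ≤ ∑ n ∈ Finset.Icc 1 (N-1), n := by
  have hsub : ({N-3, N-2, N-1} : Finset ℕ) ⊆ Finset.Icc 1 (N-1) := by
    intro x hx
    simp only [Finset.mem_insert, Finset.mem_singleton] at hx
    simp only [Finset.mem_Icc]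
    omega
  have hsum : ∑ n ∈ ({N-3, N-2, N-1} : Finset ℕ), n = (N-3) + ((N-2) + (N-1)) := by
    rw [Finset.sum_insert (by simp; omega), Finset.sum_insert (by simp; omega),
      Finset.sum_singleton]
  calc 2 * N ≤ (N-3) + ((N-2) + (N-1)) := by omega
  _ = ∑ n ∈ ({N-3, N-2, N-1} : Finset ℕ), n := hsum.symm
  _ ≤ ∑ n ∈ Finset.Icc 1 (N-1), n := Finset.sum_le_sum_of_subset hsub

lemma log_ge_aux (x : ℝ) (hx : 0 ≤ x) : x - x ^ 2 / 2 ≤ Real.log (1 + x) := by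
  have hx1 : (1:ℝ) ≤ 1 + x := by linarith
  have hint1 : Real.log (1 + x) = ∫ t in (1:ℝ)..(1+x), t⁻¹ := by
    rw [integral_inv (by rw [Set.uIcc_of_le hx1]; intro h; have := h.1; linarith)]
    simp
  have hint2 : (∫ t in (1:ℝ)..(1+x), (2 - t)) = x - x ^ 2 / 2 := by
    rw [intervalIntegral.integral_sub intervalIntegrable_const intervalIntegral.intervalIntegrable_id]
    simp [integral_id]
    ring
  rw [hint1, ← hint2]
  apply intervalIntegral.integral_mono_on hx1
  · apply ContinuousOn.intervalIntegrable
    apply ContinuousOn.sub continuousOn_const continuousOn_id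
  · apply ContinuousOn.intervalIntegrable
    apply ContinuousOn.inv₀ continuousOn_id
    intro t ht
    rw [Set.uIcc_of_le hx1] at ht
    simp only [id]
    intro h; rw [h] at ht; have := ht.1; linarith
  · intro t ht
    have h1 : (1:ℝ) ≤ t := ht.1
    have ht0 : 0 < t := by linarith
    rw [← sub_nonneg, show t⁻¹ - (2-t) = (t-1)^2/t by field_simp; ring]
    positivity

theorem eventual_inequalities :
    ∃ N₀ : ℕ, ∀ N ≥ N₀, ∀ d ≥ 2, ∀ D ≥ 1,
      Real.log (1 + 1 / (N : ℝ) ^ 2) ≥ (2 * (N : ℝ) ^ 2 - 1) / (2 * (N : ℝ) ^ 4) ∧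
      (d : ℝ) ^ N * (∏ n ∈ Finset.Icc 1 (N - 1), ((D : ℝ) * (d : ℝ) ^ n + 1)) *
          ((2 * (N : ℝ) ^ 2 - 1) / (2 * (N : ℝ) ^ 4)) ≥ Real.log 2 * ((d : ℝ) + 1) ^ N ∧
      (1 + 1 / (N : ℝ) ^ 2) ^ (D * d ^ N * ∏ i ∈ Finset.Icc 1 (N - 1), (D * d ^ i + 1)) >
        (2 : ℝ) ^ (D * (d + 1) ^ N) := by
  refine ⟨10, fun N hN d hd D hD => ?_⟩
  have foursq := four_sq_le_two_pow
  have sumge := sum_icc_ge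
  have logge := log_ge_aux
  have hN0 : (0:ℝ) < (N:ℝ) := by exact_mod_cast Nat.pos_of_ne_zero (by omega)
  set x : ℝ := 1 / (N:ℝ)^2 with hxdef
  set r : ℝ := (2 * (N : ℝ) ^ 2 - 1) / (2 * (N : ℝ) ^ 4) with hrdef
  have hx0 : 0 < 1 + x := by positivity
  have hd0 : (0:ℝ) < d := by linarith
  -- Part 1
  have part1 : Real.log (1 + x) ≥ r := by
    have := logge x (by positivity)
    have heq : x - x ^ 2 / 2 = r := by rw [hxdef, hrdef]; field_simp
    linarith [heq ▸ this]
  -- r lower bound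
  have hr : 1 / (2 * (N:ℝ)^2) ≤ r := by
    have hN2 : (1:ℝ) ≤ (N:ℝ)^2 := by
      nlinarith [show (1:ℝ) ≤ (N:ℝ) by exact_mod_cast Nat.one_le_iff_ne_zero.mpr (by omega)]
    rw [hrdef, div_le_div_iff₀ (by positivity) (by positivity)]
    nlinarith [sq_nonneg ((N:ℝ)), hN2]
  have hr0 : 0 < r := lt_of_lt_of_le (by positivity) hr
  -- A and its bound
  set A : ℝ := d ^ N * (∏ n ∈ Finset.Icc 1 (N - 1), (D * d ^ n + 1)) with hAdef
  set S : ℕ := ∑ n ∈ Finset.Icc 1 (N-1), n with hSdef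
  have hprod : d ^ S ≤ ∏ n ∈ Finset.Icc 1 (N - 1), (D * d ^ n + 1) := by
    rw [hSdef, ← Finset.prod_pow_eq_pow_sum]
    apply Finset.prod_le_prod (fun i _ => by positivity)
    intro i _
    nlinarith [pow_pos hd0 i, mul_le_mul_of_nonneg_right hD (le_of_lt (pow_pos hd0 i))]
  have hA4 : 4 * (N:ℝ)^2 * (d+1)^N ≤ A := by
    have h1 : (4:ℝ) * (N:ℝ)^2 ≤ 2 ^ N := by exact_mod_cast foursq N (by omega)
    have h2 : (d+1)^N ≤ (d^2)^N := pow_le_pow_left₀ (by linarith) (by nlinarith) N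
    have h3 : (2:ℝ)^N ≤ d^N := pow_le_pow_left₀ (by norm_num) hd N
    have h4 : d ^ (2*N) ≤ d ^ S := pow_le_pow_right₀ (by linarith) (sumge N (by omega))
    calc 4 * (N:ℝ)^2 * (d+1)^N ≤ 2^N * (d^2)^N :=
          mul_le_mul h1 h2 (by positivity) (by positivity)
    _ = 2^N * d^(2*N) := by rw [← pow_mul]
    _ ≤ d^N * d^S := mul_le_mul h3 h4 (by positivity) (by positivity)
    _ ≤ A := by rw [hAdef]; exact mul_le_mul_of_nonneg_left hprod (by positivity)
  have hA0 : 0 ≤ A := le_trans (by positivity) hA4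
  -- Part 2 core
  have hAr : 2 * (d+1)^N ≤ A * r := by
    calc 2 * (d+1)^N = (4 * (N:ℝ)^2 * (d+1)^N) * (1 / (2 * (N:ℝ)^2)) := by
          field_simp; ring
    _ ≤ A * (1 / (2 * (N:ℝ)^2)) := mul_le_mul_of_nonneg_right hA4 (by positivity)
    _ ≤ A * r := mul_le_mul_of_nonneg_left hr hA0
  have hlog2 : Real.log 2 < 1 := by have := Real.log_two_lt_d9; linarith
  have hdp : (0:ℝ) < (d+1)^N := by positivity
  have part2 : A * r ≥ Real.log 2 * (d+1)^N := by nlinarith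
  refine ⟨part1, part2, ?_⟩
  -- Part 3 (rpow)
  set E : ℝ := D * d ^ N * ∏ i ∈ Finset.Icc 1 (N - 1), (D * d ^ i + 1) with hEdef
  set K : ℝ := D * (d + 1) ^ N with hKdef
  have hEA : E = D * A := by rw [hEdef, hAdef]; ring
  have hgoal : Real.log 2 * K < Real.log (1 + x) * E := by
    have hDpos : (0:ℝ) < D := by linarith
    have hKp : (0:ℝ) < D * (d+1)^N := mul_pos hDpos hdp
    have h1 : Real.log 2 * K < D * (2 * (d+1)^N) := by
      rw [hKdef]; nlinarith [hKp, hlog2]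
    have h2 : D * (2 * (d+1)^N) ≤ D * (A * r) :=
      mul_le_mul_of_nonneg_left hAr (by linarith)
    have hE0 : (0:ℝ) ≤ E := by rw [hEA]; positivity
    have h4 : E * r ≤ E * Real.log (1 + x) := mul_le_mul_of_nonneg_left part1 hE0
    nlinarith
  calc (2:ℝ) ^ K = Real.exp (Real.log 2 * K) := by
        rw [Real.rpow_def_of_pos two_pos]
  _ < Real.exp (Real.log (1 + x) * E) := Real.exp_lt_exp.mpr hgoal
  _ = (1 + x) ^ E := by rw [Real.rpow_def_of_pos hx0]
end
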